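/- arXiv:2110.11247 — 6 statements merged into one kernel-verified Lean document; each statement's English description precedes it below -/
import Mathlib

section
/- Let $S \le T$ be reals and let $x_k : [S,T] \to \mathbb{R}^d$ be continuous functions satisfying $x_k(t) - x_k(s) = \int_s^t (F(r, x_k(r)) + g_k(r))\,dr + h_k(s,t)$ for all $s,t \in [S,T]$, where $F : [S,T] \times \mathbb{R}^d \to \mathbb{R}^d$ is continuous with $|F(t,x)| \le C(1+|x|)$, the $g_k : [S,T] \to \mathbb{R}^d$ are integrable with $\sup_k \|g_k\|_\infty < \infty$ and $g_k \to g$ pointwise, and $h_k : [S,T]^2 \to \mathbb{R}^d$ satisfy $\|h_k\|_\infty \to 0$. Suppose further that there exist $t_k \in [S,T]$ with $\sup_k |x_k(t_k)| < \infty$. Then there exists a continuous $x : [S,T] \to \mathbb{R}^d$ such that along a subsequence $x_{k_j} \to x$ uniformly and $x(t) - x(s) = \int_s^t (F(r,x(r)) + g(r))\,dr$ for all $s,t \in [S,T]$. -/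
open MeasureTheory Set Filter

open Topology

lemma myGron {v : ℝ → ℝ} (hv : Continuous v) {a b B K : ℝ} (hab : a ≤ b)
    (hK : 0 ≤ K) (hvnn : ∀ t, 0 ≤ v t)
    (hbd : ∀ t ∈ Icc a b, v t ≤ B + K * ∫ r in a..t, v r) :
    ∀ t ∈ Icc a b, v t ≤ B * Real.exp (K * (t - a)) := by
  set W : ℝ → ℝ := fun t => B + K * ∫ r in a..t, v r with hW
  have hB : 0 ≤ B := by
    have := hbd a ⟨le_refl a, hab⟩
    simpa [intervalIntegral.integral_same] using le_trans (hvnn a) this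
  have hWd : ∀ t : ℝ, HasDerivAt W (K * v t) t := by
    intro t
    have h1 : HasDerivAt (fun u => ∫ r in a..u, v r) (v t) t :=
      intervalIntegral.integral_hasDerivAt_right (hv.intervalIntegrable a t)
        (hv.stronglyMeasurable.stronglyMeasurableAtFilter) hv.continuousAt
    exact (h1.const_mul K).const_add B
  have hWnn : ∀ t ∈ Icc a b, 0 ≤ W t := fun t ht => le_trans (hvnn t) (hbd t ht)
  have key : ∀ t ∈ Icc a b, ‖W t‖ ≤ gronwallBound B K 0 (t - a) := by
    apply norm_le_gronwallBound_of_norm_deriv_right_le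
      (f := W) (f' := fun t => K * v t)
    · exact (continuous_const.add (continuous_const.mul
        (intervalIntegral.continuous_primitive (fun s t => hv.intervalIntegrable s t) a))).continuousOn
    · exact fun t _ => (hWd t).hasDerivWithinAt
    · simp [hW, intervalIntegral.integral_same, abs_of_nonneg hB, Real.norm_eq_abs]
    · intro t ht
      have htI : t ∈ Icc a b := ⟨ht.1, ht.2.le⟩
      rw [Real.norm_eq_abs, Real.norm_eq_abs, abs_of_nonneg (mul_nonneg hK (hvnn t)),
        abs_of_nonneg (hWnn t htI)]
      have := mul_le_mul_of_nonneg_left (hbd t htI) hK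
      simp only [hW]
      linarith
  intro t ht
  have h2 := key t ht
  rw [Real.norm_eq_abs, abs_of_nonneg (hWnn t ht), gronwallBound_ε0] at h2
  exact le_trans (hbd t ht) h2

lemma myGron2 {v : ℝ → ℝ} (hv : Continuous v) {S T t0 B K : ℝ}
    (hK : 0 ≤ K) (hvnn : ∀ t, 0 ≤ v t) (ht0 : t0 ∈ Icc S T)
    (hbd : ∀ t ∈ Icc S T, v t ≤ B + K * |∫ r in t0..t, v r|) :
    ∀ t ∈ Icc S T, v t ≤ B * Real.exp (K * (T - S)) := by
  have hB : 0 ≤ B := by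
    have := hbd t0 ht0
    simpa [intervalIntegral.integral_same] using le_trans (hvnn t0) this
  have hmono : ∀ c : ℝ, c ≤ K * (T - S) → B * Real.exp c ≤ B * Real.exp (K * (T - S)) :=
    fun c hc => mul_le_mul_of_nonneg_left (Real.exp_le_exp.2 hc) hB
  intro t ht
  rcases le_total t0 t with hc | hc
  · -- forward
    have hbd' : ∀ s ∈ Icc t0 T, v s ≤ B + K * ∫ r in t0..s, v r := by
      intro s hs
      have h1 := hbd s ⟨ht0.1.trans hs.1, hs.2⟩
      rwa [abs_of_nonneg (intervalIntegral.integral_nonneg hs.1 (fun r _ => hvnn r))] at h1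
    have fwd := myGron hv (a := t0) (b := T) ht0.2 hK hvnn hbd' t ⟨hc, ht.2⟩
    exact fwd.trans (hmono _ (mul_le_mul_of_nonneg_left (by linarith [ht0.1, ht.2]) hK))
  · -- backward
    set w : ℝ → ℝ := fun τ => v (t0 - τ) with hw
    have hwc : Continuous w := hv.comp (continuous_const.sub continuous_id)
    have hbd' : ∀ τ ∈ Icc 0 (t0 - S), w τ ≤ B + K * ∫ r in (0:ℝ)..τ, w r := by
      intro τ hτ
      have hmem : t0 - τ ∈ Icc S T := ⟨by linarith [hτ.2], by linarith [hτ.1, ht0.2]⟩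
      have h1 := hbd (t0 - τ) hmem
      have h2 : (∫ r in (0:ℝ)..τ, w r) = ∫ r in (t0 - τ)..t0, v r := by
        have := intervalIntegral.integral_comp_sub_left (a := (0:ℝ)) (b := τ) v t0
        simpa [hw] using this
      have h3 : |∫ r in t0..(t0 - τ), v r| = ∫ r in (t0 - τ)..t0, v r := by
        rw [intervalIntegral.integral_symm]
        rw [abs_neg, abs_of_nonneg (intervalIntegral.integral_nonneg (by linarith [hτ.1]) (fun r _ => hvnn r))]
      rw [h2]
      calc w τ = v (t0 - τ) := rfl
        _ ≤ B + K * |∫ r in t0..(t0 - τ), v r| := h1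
        _ = B + K * ∫ r in (t0 - τ)..t0, v r := by rw [h3]
    have bwd := myGron hwc (a := 0) (b := t0 - S) (by linarith [ht0.1]) hK
      (fun τ => hvnn _) hbd' (t0 - t) ⟨by linarith, by linarith [ht.1]⟩
    have hwt : w (t0 - t) = v t := by simp [hw]
    rw [hwt] at bwd
    exact bwd.trans (hmono _ (mul_le_mul_of_nonneg_left (by simp; linarith [ht.1, ht0.2]) hK))

set_option maxHeartbeats 1000000 in
set_option synthInstance.maxHeartbeats 200000 in
/-- ODE approximation lemma: solutions of perturbed integral equations converge
(along a subsequence) to a solution of the limiting integral equation. -/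
theorem stmt_0 {d : ℕ} (S T : ℝ) (hST : S ≤ T) (C : ℝ)
    (F : ℝ → EuclideanSpace ℝ (Fin d) → EuclideanSpace ℝ (Fin d))
    (hFcont : ContinuousOn (fun p : ℝ × EuclideanSpace ℝ (Fin d) => F p.1 p.2)
      (Icc S T ×ˢ univ))
    (hFgrowth : ∀ t ∈ Icc S T, ∀ x, ‖F t x‖ ≤ C * (1 + ‖x‖))
    (x : ℕ → ℝ → EuclideanSpace ℝ (Fin d))
    (hxcont : ∀ k, ContinuousOn (x k) (Icc S T))
    (g : ℕ → ℝ → EuclideanSpace ℝ (Fin d)) (glim : ℝ → EuclideanSpace ℝ (Fin d))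
    (hgint : ∀ k, IntegrableOn (g k) (Icc S T))
    (hgbdd : ∃ M, ∀ k, ∀ t ∈ Icc S T, ‖g k t‖ ≤ M)
    (hgptw : ∀ t ∈ Icc S T, Tendsto (fun k => g k t) atTop (nhds (glim t)))
    (h : ℕ → ℝ → ℝ → EuclideanSpace ℝ (Fin d))
    (hh : ∀ ε > 0, ∃ N, ∀ k ≥ N, ∀ s ∈ Icc S T, ∀ t ∈ Icc S T, ‖h k s t‖ ≤ ε)
    (heq : ∀ k, ∀ s ∈ Icc S T, ∀ t ∈ Icc S T,
      x k t - x k s = (∫ r in s..t, (F r (x k r) + g k r)) + h k s t)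
    (tk : ℕ → ℝ) (htk : ∀ k, tk k ∈ Icc S T)
    (htkbdd : ∃ M, ∀ k, ‖x k (tk k)‖ ≤ M) :
    ∃ xlim : ℝ → EuclideanSpace ℝ (Fin d), ContinuousOn xlim (Icc S T) ∧
      ∃ φ : ℕ → ℕ, StrictMono φ ∧
        TendstoUniformlyOn (fun j => x (φ j)) xlim atTop (Icc S T) ∧
        ∀ s ∈ Icc S T, ∀ t ∈ Icc S T,
          xlim t - xlim s = ∫ r in s..t, (F r (xlim r) + glim r) := by
  classical
  obtain ⟨M0, hM0⟩ := htkbdd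
  obtain ⟨Mg, hMg⟩ := hgbdd
  have hSmem : S ∈ Icc S T := ⟨le_refl S, hST⟩
  have hC : 0 ≤ C := le_trans (norm_nonneg _) (by simpa using hFgrowth S hSmem 0)
  have hMg0 : 0 ≤ Mg := le_trans (norm_nonneg _) (hMg 0 S hSmem)
  have hM00 : 0 ≤ M0 := le_trans (norm_nonneg _) (hM0 0)
  set K := C + Mg with hKdef
  have hK0 : 0 ≤ K := add_nonneg hC hMg0
  have hsubIcc : ∀ {s t : ℝ}, s ∈ Icc S T → t ∈ Icc S T → uIcc s t ⊆ Icc S T :=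
    fun hs ht => uIcc_subset_Icc hs ht
  have hFk : ∀ k, ContinuousOn (fun r => F r (x k r)) (Icc S T) := by
    intro k
    have hpr : ContinuousOn (fun r : ℝ => ((r, x k r) : ℝ × EuclideanSpace ℝ (Fin d)))
        (Icc S T) := continuousOn_id.prodMk (hxcont k)
    exact hFcont.comp hpr (fun r hr => ⟨hr, mem_univ _⟩)
  -- the extended functions v k
  set v : ℕ → ℝ → ℝ := fun k r => 1 + ‖x k ((projIcc S T hST r : Icc S T) : ℝ)‖ with hvdef
  have hvc : ∀ k, Continuous (v k) := by
    intro k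
    exact continuous_const.add
      (((hxcont k).restrict.comp continuous_projIcc).norm)
  have hveq : ∀ k, ∀ r ∈ Icc S T, v k r = 1 + ‖x k r‖ := by
    intro k r hr
    simp [hvdef, projIcc_of_mem hST hr]
  have hvnn : ∀ k t, 0 ≤ v k t := fun k t => by positivity
  -- pointwise bound of the integrand by K * v
  have hIbnd : ∀ k, ∀ r ∈ Icc S T, ‖F r (x k r) + g k r‖ ≤ K * v k r := by
    intro k r hr
    have h1 : ‖F r (x k r)‖ ≤ C * (1 + ‖x k r‖) := hFgrowth r hr _
    have h2 : ‖g k r‖ ≤ Mg := hMg k r hr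
    have h3 : (0:ℝ) ≤ ‖x k r‖ := norm_nonneg _
    have h4 := norm_add_le (F r (x k r)) (g k r)
    rw [hveq k r hr, hKdef]
    nlinarith
  -- Gronwall bound for large k
  obtain ⟨N1, hN1⟩ := hh 1 one_pos
  set VB := (M0 + 2) * Real.exp (K * (T - S)) with hVBdef
  have hgron : ∀ k, N1 ≤ k → ∀ t ∈ Icc S T, ‖x k t‖ ≤ VB := by
    intro k hk
    have hbd : ∀ t ∈ Icc S T, v k t ≤ (M0 + 2) + K * |∫ r in (tk k)..t, v k r| := by
      intro t ht
      have e := heq k (tk k) (htk k) t ht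
      have hd : ‖x k t - x k (tk k)‖
          ≤ ‖∫ r in (tk k)..t, (F r (x k r) + g k r)‖ + 1 := by
        rw [e]
        exact (norm_add_le _ _).trans (by gcongr; exact hN1 k hk (tk k) (htk k) t ht)
      have hIbnd' : ‖∫ r in (tk k)..t, (F r (x k r) + g k r)‖
          ≤ |∫ r in (tk k)..t, K * v k r| := by
        apply intervalIntegral.norm_integral_le_abs_of_norm_le
        · refine ae_restrict_of_forall_mem measurableSet_uIoc (fun r hr => ?_)
          exact hIbnd k r (hsubIcc (htk k) ht (uIoc_subset_uIcc hr))
        · exact (continuous_const.mul (hvc k)).intervalIntegrable _ _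
      have habs : |∫ r in (tk k)..t, K * v k r| = K * |∫ r in (tk k)..t, v k r| := by
        rw [intervalIntegral.integral_const_mul, abs_mul, abs_of_nonneg hK0]
      have h4 : ‖x k t‖ ≤ ‖x k (tk k)‖ + ‖x k t - x k (tk k)‖ := by
        simpa using norm_add_le (x k (tk k)) (x k t - x k (tk k))
      have h5 := hM0 k
      rw [hveq k t ht]
      rw [habs] at hIbnd'
      linarith
    intro t ht
    have := myGron2 (hvc k) hK0 (hvnn k) (htk k) hbd t ht
    rw [hveq k t ht] at this
    rw [hVBdef]
    linarith
  -- bound for small k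
  have hfin : ∀ n : ℕ, ∃ B, ∀ k < n, ∀ t ∈ Icc S T, ‖x k t‖ ≤ B := by
    intro n
    induction n with
    | zero => exact ⟨0, fun k hk => absurd hk (Nat.not_lt_zero k)⟩
    | succ n ih =>
      obtain ⟨B1, hB1⟩ := ih
      obtain ⟨B2, hB2⟩ := isCompact_Icc.exists_bound_of_continuousOn (hxcont n)
      refine ⟨max B1 B2, fun k hk t ht => ?_⟩
      rcases Nat.lt_succ_iff_lt_or_eq.1 hk with hlt | heqk
      · exact (hB1 k hlt t ht).trans (le_max_left _ _)
      · subst heqk; exact (hB2 t ht).trans (le_max_right _ _)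
  obtain ⟨B1, hB1⟩ := hfin N1
  set Bnd := max VB (max B1 0) with hBnddef
  have hBnd0 : 0 ≤ Bnd := le_max_of_le_right (le_max_right _ _)
  have hxbnd : ∀ k, ∀ t ∈ Icc S T, ‖x k t‖ ≤ Bnd := by
    intro k t ht
    rcases lt_or_ge k N1 with hk | hk
    · exact (hB1 k hk t ht).trans (le_max_of_le_right (le_max_left _ _))
    · exact (hgron k hk t ht).trans (le_max_left _ _)
  -- uniform bound on integrand
  set L := C * (1 + Bnd) + Mg with hLdef
  have hL0 : 0 ≤ L := by positivity
  have hIL : ∀ k, ∀ r ∈ Icc S T, ‖F r (x k r) + g k r‖ ≤ L := by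
    intro k r hr
    have h1 := hFgrowth r hr (x k r)
    have h2 := hMg k r hr
    have h3 := hxbnd k r hr
    have h4 := norm_add_le (F r (x k r)) (g k r)
    rw [hLdef]
    nlinarith [norm_nonneg (x k r)]
  -- difference estimate
  have hdiff : ∀ k, ∀ s ∈ Icc S T, ∀ t ∈ Icc S T,
      ‖x k t - x k s‖ ≤ L * |t - s| + ‖h k s t‖ := by
    intro k s hs t ht
    rw [heq k s hs t ht]
    refine (norm_add_le _ _).trans (add_le_add_left ?_ _)
    apply intervalIntegral.norm_integral_le_of_norm_le_const
    intro r hr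
    exact hIL k r (hsubIcc hs ht (uIoc_subset_uIcc hr))
  -- equicontinuity
  have hec : UniformEquicontinuous (fun k (t : Icc S T) => x k ↑t) := by
    rw [Metric.uniformEquicontinuous_iff]
    intro ε hε
    obtain ⟨N, hN⟩ := hh (ε / 3) (by positivity)
    have hfin2 : ∀ n : ℕ, ∃ δ > (0:ℝ), ∀ a b : Icc S T, dist a b < δ →
        ∀ k < n, dist (x k ↑a) (x k ↑b) < ε := by
      intro n
      induction n with
      | zero => exact ⟨1, one_pos, fun a b _ k hk => absurd hk (Nat.not_lt_zero k)⟩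
      | succ n ih =>
        obtain ⟨δ1, hδ1, hδ1'⟩ := ih
        have huc : UniformContinuousOn (x n) (Icc S T) :=
          isCompact_Icc.uniformContinuousOn_of_continuous (hxcont n)
        rw [Metric.uniformContinuousOn_iff] at huc
        obtain ⟨δ2, hδ2, hδ2'⟩ := huc ε hε
        refine ⟨min δ1 δ2, lt_min hδ1 hδ2, fun a b hab k hk => ?_⟩
        rcases Nat.lt_succ_iff_lt_or_eq.1 hk with hlt | heqk
        · exact hδ1' a b (hab.trans_le (min_le_left _ _)) k hlt
        · subst heqk
          refine hδ2' ↑a a.2 ↑b b.2 ?_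
          rw [← Subtype.dist_eq]
          exact hab.trans_le (min_le_right _ _)
    obtain ⟨δ1, hδ1, hδ1'⟩ := hfin2 N
    have hL1 : (0:ℝ) < L + 1 := by linarith
    refine ⟨min δ1 (ε / (3 * (L + 1))), lt_min hδ1 (by positivity), fun a b hab k => ?_⟩
    rcases lt_or_ge k N with hk | hk
    · exact hδ1' a b (hab.trans_le (min_le_left _ _)) k hk
    · have h1 := hdiff k ↑b b.2 ↑a a.2
      have h2 : ‖h k ↑b ↑a‖ ≤ ε / 3 := hN k hk ↑b b.2 ↑a a.2
      have h3 : |(↑a : ℝ) - ↑b| < ε / (3 * (L + 1)) := by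
        have := hab.trans_le (min_le_right _ _)
        rwa [Subtype.dist_eq, Real.dist_eq] at this
      have h4 : L * |(↑a : ℝ) - ↑b| ≤ L * (ε / (3 * (L + 1))) :=
        mul_le_mul_of_nonneg_left h3.le hL0
      have he5 : (L + 1) * (ε / (3 * (L + 1))) = ε / 3 := by
        field_simp
      have h5 : L * (ε / (3 * (L + 1))) ≤ ε / 3 := by
        rw [← he5]
        exact mul_le_mul_of_nonneg_right (by linarith) (by positivity)
      rw [dist_eq_norm]
      calc ‖x k ↑a - x k ↑b‖ ≤ L * |(↑a : ℝ) - ↑b| + ‖h k ↑b ↑a‖ := h1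
        _ ≤ ε / 3 + ε / 3 := by linarith
        _ < ε := by linarith
  have hecc : Equicontinuous (fun k (t : Icc S T) => x k ↑t) := hec.equicontinuous
  -- Arzela-Ascoli
  set bk : ℕ → BoundedContinuousFunction (Icc S T) (EuclideanSpace ℝ (Fin d)) :=
    fun k => BoundedContinuousFunction.mkOfCompact ⟨_, (hxcont k).restrict⟩ with hbkdef
  have hcomp : IsCompact (closure (Set.range bk)) := by
    apply BoundedContinuousFunction.arzela_ascoli (Metric.closedBall 0 Bnd)
      (isCompact_closedBall 0 Bnd)
    · rintro f t ⟨k, rfl⟩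
      rw [mem_closedBall_zero_iff]
      exact hxbnd k ↑t t.2
    · have hch : ∀ f : Set.range bk, ∃ k, bk k = ↑f := fun f => f.2
      choose κ hκ using hch
      have hre : ((↑) : Set.range bk → (Icc S T) → EuclideanSpace ℝ (Fin d))
          = (fun k (t : Icc S T) => x k ↑t) ∘ κ := by
        funext f
        rw [← hκ f]
        rfl
      rw [hre]
      exact hecc.comp κ
  obtain ⟨f, hfmem, φ, hφ, hconv⟩ :=
    hcomp.tendsto_subseq (fun k => subset_closure (mem_range_self k))
  have hTU : TendstoUniformly (fun j => ⇑(bk (φ j))) ⇑f atTop :=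
    BoundedContinuousFunction.tendsto_iff_tendstoUniformly.1 hconv
  set xlim : ℝ → EuclideanSpace ℝ (Fin d) := fun t => f (projIcc S T hST t) with hxlimdef
  have hxlimc : ContinuousOn xlim (Icc S T) :=
    (f.continuous.comp continuous_projIcc).continuousOn
  have hxlimeq : ∀ (t : Icc S T), xlim ↑t = f t := by
    intro t
    simp [hxlimdef, projIcc_val]
  have hTUon : TendstoUniformlyOn (fun j => x (φ j)) xlim atTop (Icc S T) := by
    rw [tendstoUniformlyOn_iff_tendstoUniformly_comp_coe]
    have he1 : (xlim ∘ ((↑) : Icc S T → ℝ)) = ⇑f := funext fun t => hxlimeq t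
    rw [he1]
    exact hTU
  have hptw : ∀ r ∈ Icc S T, Tendsto (fun j => x (φ j) r) atTop (𝓝 (xlim r)) :=
    fun r hr => hTUon.tendsto_at hr
  refine ⟨xlim, hxlimc, φ, hφ, hTUon, ?_⟩
  intro s hs t ht
  have hsub : Set.uIoc s t ⊆ Icc S T := fun r hr =>
    ⟨(le_inf hs.1 ht.1).trans hr.1.le, hr.2.trans (sup_le hs.2 ht.2)⟩
  have h3 : Tendsto (fun j => ∫ r in s..t, (F r (x (φ j) r) + g (φ j) r)) atTop
      (𝓝 (∫ r in s..t, (F r (xlim r) + glim r))) := by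
    apply intervalIntegral.tendsto_integral_filter_of_dominated_convergence (fun _ => L)
    · refine Eventually.of_forall (fun j => ?_)
      have hm : AEStronglyMeasurable (fun r => F r (x (φ j) r) + g (φ j) r)
          (volume.restrict (Icc S T)) :=
        ((hFk (φ j)).aestronglyMeasurable measurableSet_Icc).add
          ((hgint (φ j)).aestronglyMeasurable)
      exact hm.mono_measure (Measure.restrict_mono hsub le_rfl)
    · exact Eventually.of_forall (fun j => ae_of_all _ (fun r hr => hIL (φ j) r (hsub hr)))
    · exact intervalIntegrable_const
    · refine ae_of_all _ (fun r hr => ?_)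
      have hrI := hsub hr
      have hF : Tendsto (fun j => F r (x (φ j) r)) atTop (𝓝 (F r (xlim r))) := by
        have hcw : ContinuousWithinAt
            (fun p : ℝ × EuclideanSpace ℝ (Fin d) => F p.1 p.2)
            (Icc S T ×ˢ univ) (r, xlim r) := hFcont (r, xlim r) ⟨hrI, mem_univ _⟩
        have hp : Tendsto (fun j => ((r, x (φ j) r) : ℝ × EuclideanSpace ℝ (Fin d)))
            atTop (𝓝[Icc S T ×ˢ univ] (r, xlim r)) := by
          apply tendsto_nhdsWithin_of_tendsto_nhds_of_eventually_within
          · exact tendsto_const_nhds.prodMk_nhds (hptw r hrI)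
          · exact Eventually.of_forall (fun j => ⟨hrI, mem_univ _⟩)
        exact hcw.tendsto.comp hp
      exact hF.add ((hgptw r hrI).comp hφ.tendsto_atTop)
  have h2 : Tendsto (fun j => h (φ j) s t) atTop (𝓝 0) := by
    rw [NormedAddCommGroup.tendsto_nhds_zero]
    intro ε hε
    obtain ⟨N, hN⟩ := hh (ε / 2) (by positivity)
    filter_upwards [eventually_ge_atTop N] with j hj
    exact lt_of_le_of_lt (hN (φ j) (le_trans hj hφ.le_apply) s hs t ht) (by linarith)
  have h1 : Tendsto (fun j => x (φ j) t - x (φ j) s) atTop (𝓝 (xlim t - xlim s)) :=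
    (hptw t ht).sub (hptw s hs)
  have h4 : Tendsto (fun j => x (φ j) t - x (φ j) s) atTop
      (𝓝 ((∫ r in s..t, (F r (xlim r) + glim r)) + 0)) := by
    have he : (fun j => x (φ j) t - x (φ j) s)
        = fun j => (∫ r in s..t, (F r (x (φ j) r) + g (φ j) r)) + h (φ j) s t :=
      funext fun j => heq (φ j) s hs t ht
    rw [he]
    exact h3.add h2
  have h5 := tendsto_nhds_unique h1 h4
  rwa [add_zero] at h5
end

section
/- Let $T > 0$ and let $f : (0,T] \to \mathbb{R}$ be differentiable such that the integrals $\int_\varepsilon^T f(s)\,ds$ neither diverge to $+\infty$ nor to $-\infty$ as $\varepsilon \searrow 0$. Let $h : (0,T] \to (0,\infty)$ be a non-increasing differentiable function with $\int_0^T h(s)\,ds = +\infty$. Then there exists a sequence $t_k \searrow 0$ such that $|f(t_k)| \le h(t_k)$ and $f'(t_k) \ge h'(t_k)$ for every $k$. -/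
open MeasureTheory Set Filter Topology

/-!
Suppose every point of `(0, δ]` with `|f| ≤ h` has `f' < h'`. Since `h' ≤ 0`, both `f - h` and
`f + h` then cross zero only downwards. If `f ≤ -h` at points arbitrarily close to `0`, this
forces `f ≤ -h` on all of `(0, δ]`, so `∫ f → -∞`. Otherwise `f > -h` on some `(0, a]`, and
moving left from `a` the graph of `f` can never fall below `h + min 0 (f a - h a)`, so
`∫ f → +∞` because `∫ h → +∞`. Either way the hypothesis on `f` is contradicted, so good points
exist in every `(0, δ]`, and a sequence of them decreasing to `0` is extracted from their
infimum `0`.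
-/

theorem image_le_of_deriv_left_gt_deriv_boundary {f f' B B' : ℝ → ℝ} {a b : ℝ}
    (hf : ContinuousOn f (Icc a b)) (hf' : ∀ x ∈ Ioc a b, HasDerivAt f (f' x) x)
    (hb : f b ≤ B b) (hB : ContinuousOn B (Icc a b))
    (hB' : ∀ x ∈ Ioc a b, HasDerivAt B (B' x) x)
    (bound : ∀ x ∈ Ioc a b, f x = B x → B' x < f' x) : ∀ ⦃x⦄, x ∈ Icc a b → f x ≤ B x := by
  have hneg : MapsTo (fun x : ℝ => -x) (Icc (-b) (-a)) (Icc a b) := fun x hx =>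
    ⟨le_neg_of_le_neg hx.2, neg_le_of_neg_le hx.1⟩
  have hneg' : ∀ x ∈ Ico (-b) (-a), -x ∈ Ioc a b := fun x hx =>
    ⟨lt_neg_of_lt_neg hx.2, neg_le_of_neg_le hx.1⟩
  have hderiv : ∀ {g g' : ℝ → ℝ}, (∀ x ∈ Ioc a b, HasDerivAt g (g' x) x) →
      ∀ x ∈ Ico (-b) (-a), HasDerivWithinAt (fun x => g (-x)) (-g' (-x)) (Ici x) x :=
    fun hg x hx => by
      have := (hg (-x) (hneg' x hx)).comp x (hasDerivAt_neg x)
      rw [mul_neg_one] at this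
      exact this.hasDerivWithinAt
  intro x hx
  simpa using image_le_of_deriv_right_lt_deriv_boundary' (hf.comp continuousOn_neg hneg)
    (hderiv hf') (by simpa using hb) (hB.comp continuousOn_neg hneg) (hderiv hB')
    (fun y hy hfy => neg_lt_neg (bound (-y) (hneg' y hy) hfy)) (x := -x)
    ⟨neg_le_neg hx.2, neg_le_neg hx.1⟩

lemma HasDerivAt.nonpos_of_antitoneOn_Ioc {g : ℝ → ℝ} {g' a b x : ℝ} (hx : x ∈ Ioc a b)
    (hg : HasDerivAt g g' x) (hanti : AntitoneOn g (Ioc a b)) : g' ≤ 0 := by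
  refine hg.hasDerivWithinAt.nonpos_of_antitoneOn ?_ hanti
  rw [accPt_principal_iff_nhdsWithin]
  refine (right_nhdsWithin_Ioo_neBot hx.1).mono (nhdsWithin_mono _ fun y hy => ?_)
  exact ⟨Ioo_subset_Ioc_self ⟨hy.1, hy.2.trans_le hx.2⟩, hy.2.ne⟩

lemma ContinuousOn.intervalIntegrable_of_Ioc {g : ℝ → ℝ} {T x y : ℝ}
    (hg : ContinuousOn g (Ioc 0 T)) (hx : 0 < x) (hxy : x ≤ y) (hy : y ≤ T) :
    IntervalIntegrable g volume x y :=
  (hg.mono fun z hz => by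
    rw [uIcc_of_le hxy] at hz
    exact ⟨hx.trans_le hz.1, hz.2.trans hy⟩).intervalIntegrable

lemma tendsto_integral_atTop_of_le {T a : ℝ} {f g : ℝ → ℝ} (ha : a ∈ Ioc 0 T)
    (hf : ContinuousOn f (Ioc 0 T)) (hg : ContinuousOn g (Ioc 0 T))
    (hgf : ∀ t ∈ Ioc 0 a, g t ≤ f t)
    (hg_int : Tendsto (fun ε => ∫ s in ε..T, g s) (𝓝[>] 0) atTop) :
    Tendsto (fun ε => ∫ s in ε..T, f s) (𝓝[>] 0) atTop := by
  have hfg : ContinuousOn (fun s => f s - g s) (Ioc 0 T) := hf.sub hg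
  refine tendsto_atTop_mono' _ ?_
    (tendsto_atTop_add_const_right _ (∫ s in a..T, f s - g s) hg_int)
  filter_upwards [Ioc_mem_nhdsGT ha.1] with ε hε
  have tail_le : ∫ s in a..T, f s - g s ≤ ∫ s in ε..T, f s - g s := by
    rw [← intervalIntegral.integral_add_adjacent_intervals
      (hfg.intervalIntegrable_of_Ioc hε.1 hε.2 ha.2)
      (hfg.intervalIntegrable_of_Ioc ha.1 ha.2 le_rfl)]
    refine le_add_of_nonneg_left (intervalIntegral.integral_nonneg hε.2 fun t ht => ?_)
    exact sub_nonneg.2 (hgf t ⟨hε.1.trans_le ht.1, ht.2⟩)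
  rw [intervalIntegral.integral_sub (hf.intervalIntegrable_of_Ioc hε.1 (hε.2.trans ha.2) le_rfl)
    (hg.intervalIntegrable_of_Ioc hε.1 (hε.2.trans ha.2) le_rfl)] at tail_le
  linarith

lemma tendsto_integral_add_const_atTop {T c : ℝ} {g : ℝ → ℝ} (hT : 0 < T)
    (hg : ContinuousOn g (Ioc 0 T))
    (hg_int : Tendsto (fun ε => ∫ s in ε..T, g s) (𝓝[>] 0) atTop) :
    Tendsto (fun ε => ∫ s in ε..T, (g s + c)) (𝓝[>] 0) atTop := by
  have hconst : Tendsto (fun ε : ℝ => (T - ε) * c) (𝓝[>] 0) (𝓝 ((T - 0) * c)) :=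
    ((continuous_const.sub continuous_id).mul continuous_const).tendsto 0 |>.mono_left
      nhdsWithin_le_nhds
  refine (hg_int.atTop_add hconst).congr' ?_
  filter_upwards [Ioo_mem_nhdsGT hT] with ε hε
  rw [intervalIntegral.integral_add (hg.intervalIntegrable_of_Ioc hε.1 hε.2.le le_rfl)
    intervalIntegrable_const, intervalIntegral.integral_const, smul_eq_mul]

section

variable {T : ℝ} {f f' h h' : ℝ → ℝ}

lemma tendsto_integral_atTop_of_forall_neg_lt {a : ℝ} (ha : a ∈ Ioc 0 T)
    (hf : ∀ t ∈ Ioc 0 T, HasDerivAt f (f' t) t) (hh : ∀ t ∈ Ioc 0 T, HasDerivAt h (h' t) t)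
    (hhint : Tendsto (fun ε => ∫ s in ε..T, h s) (𝓝[>] 0) atTop)
    (hcross : ∀ t ∈ Ioc 0 a, |f t| ≤ h t → f' t < h' t) (hlower : ∀ t ∈ Ioc 0 a, -h t < f t) :
    Tendsto (fun ε => ∫ s in ε..T, f s) (𝓝[>] 0) atTop := by
  have hfc : ContinuousOn f (Ioc 0 T) := HasDerivAt.continuousOn hf
  have hhc : ContinuousOn h (Ioc 0 T) := HasDerivAt.continuousOn hh
  set c := min 0 (f a - h a)
  have hsub : ∀ {t}, 0 < t → Icc t a ⊆ Ioc 0 T := fun ht _ hx =>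
    ⟨ht.trans_le hx.1, hx.2.trans ha.2⟩
  have hfence : ∀ t ∈ Ioc 0 a, h t + c ≤ f t := by
    intro t ht
    refine image_le_of_deriv_left_gt_deriv_boundary (f := fun s => h s + c) (f' := h')
      ((hhc.mono (hsub ht.1)).add continuousOn_const)
      (fun x hx => (hh x (hsub ht.1 (Ioc_subset_Icc_self hx))).add_const c)
      (by linarith [min_le_right 0 (f a - h a)]) (hfc.mono (hsub ht.1))
      (fun x hx => hf x (hsub ht.1 (Ioc_subset_Icc_self hx))) (fun x hx hfx => ?_)
      (left_mem_Icc.2 ht.2)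
    have hx : x ∈ Ioc 0 a := ⟨ht.1.trans hx.1, hx.2⟩
    refine hcross x hx (abs_le.2 ⟨(hlower x hx).le, ?_⟩)
    linarith [min_le_left 0 (f a - h a)]
  exact tendsto_integral_atTop_of_le ha hfc (hhc.add continuousOn_const) hfence
    (tendsto_integral_add_const_atTop (ha.1.trans_le ha.2) hhc hhint)

lemma tendsto_integral_atBot_of_frequently_le_neg {δ : ℝ} (hδ : δ ∈ Ioc 0 T)
    (hf : ∀ t ∈ Ioc 0 T, HasDerivAt f (f' t) t) (hh : ∀ t ∈ Ioc 0 T, HasDerivAt h (h' t) t)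
    (hhpos : ∀ t ∈ Ioc 0 T, 0 < h t) (hhmono : AntitoneOn h (Ioc 0 T))
    (hhint : Tendsto (fun ε => ∫ s in ε..T, h s) (𝓝[>] 0) atTop)
    (hcross : ∀ t ∈ Ioc 0 δ, |f t| ≤ h t → f' t < h' t)
    (hupper : ∀ a ∈ Ioc 0 δ, ∃ t ∈ Ioc 0 a, f t ≤ -h t) :
    Tendsto (fun ε => ∫ s in ε..T, f s) (𝓝[>] 0) atBot := by
  have hfc : ContinuousOn f (Ioc 0 T) := HasDerivAt.continuousOn hf
  have hhc : ContinuousOn h (Ioc 0 T) := HasDerivAt.continuousOn hh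
  have hsub : Ioc 0 δ ⊆ Ioc 0 T := Ioc_subset_Ioc_right hδ.2
  have hfence : ∀ s ∈ Ioc 0 δ, h s ≤ -f s := by
    intro s hs
    obtain ⟨t, ht, hft⟩ := hupper s hs
    have hts : Icc t s ⊆ Ioc 0 T := (Icc_subset_Ioc ht.1 hs.2).trans hsub
    refine le_neg_of_le_neg <| image_le_of_deriv_right_lt_deriv_boundary' (hfc.mono hts)
      (fun x hx => (hf x (hts (Ico_subset_Icc_self hx))).hasDerivWithinAt) hft
      (hhc.mono hts).neg (fun x hx => (hh x (hts (Ico_subset_Icc_self hx))).neg.hasDerivWithinAt)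
      (fun x hx hfx => ?_) (right_mem_Icc.2 ht.2)
    have hxδ : x ∈ Ioc 0 δ := ⟨ht.1.trans_le hx.1, hx.2.le.trans hs.2⟩
    have hx := hsub hxδ
    have hh'x : h' x ≤ 0 := (hh x hx).nonpos_of_antitoneOn_Ioc hx hhmono
    have := hcross x hxδ (by rw [hfx, Pi.neg_apply, abs_neg, abs_of_pos (hhpos x hx)])
    linarith
  have := tendsto_integral_atTop_of_le (f := fun s => -f s) hδ hfc.neg hhc hfence hhint
  simpa only [intervalIntegral.integral_neg, tendsto_neg_atTop_iff] using this

lemma exists_abs_le_and_deriv_le {δ : ℝ} (hδ : δ ∈ Ioc 0 T)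
    (hf : ∀ t ∈ Ioc 0 T, HasDerivAt f (f' t) t)
    (hfint_top : ¬ Tendsto (fun ε => ∫ s in ε..T, f s) (𝓝[>] 0) atTop)
    (hfint_bot : ¬ Tendsto (fun ε => ∫ s in ε..T, f s) (𝓝[>] 0) atBot)
    (hh : ∀ t ∈ Ioc 0 T, HasDerivAt h (h' t) t) (hhpos : ∀ t ∈ Ioc 0 T, 0 < h t)
    (hhmono : AntitoneOn h (Ioc 0 T))
    (hhint : Tendsto (fun ε => ∫ s in ε..T, h s) (𝓝[>] 0) atTop) :
    ∃ u ∈ Ioc 0 δ, |f u| ≤ h u ∧ h' u ≤ f' u := by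
  by_contra! hcross
  by_cases hlower : ∃ a ∈ Ioc 0 δ, ∀ t ∈ Ioc 0 a, -h t < f t
  · obtain ⟨a, ha, hlower⟩ := hlower
    exact hfint_top <| tendsto_integral_atTop_of_forall_neg_lt ⟨ha.1, ha.2.trans hδ.2⟩ hf hh
      hhint (fun t ht => hcross t ⟨ht.1, ht.2.trans ha.2⟩) hlower
  · push Not at hlower
    exact hfint_bot <|
      tendsto_integral_atBot_of_frequently_le_neg hδ hf hh hhpos hhmono hhint hcross hlower

end

/-- Subsequence extraction lemma: along a sequence `t_k ↘ 0` one has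
`|f(t_k)| ≤ h(t_k)` and `f'(t_k) ≥ h'(t_k)`. -/
theorem stmt_2 (T : ℝ) (hT : 0 < T)
    (f f' : ℝ → ℝ) (hf : ∀ t ∈ Ioc 0 T, HasDerivAt f (f' t) t)
    (hfint_top : ¬ Tendsto (fun ε => ∫ s in ε..T, f s) (nhdsWithin 0 (Ioi 0)) atTop)
    (hfint_bot : ¬ Tendsto (fun ε => ∫ s in ε..T, f s) (nhdsWithin 0 (Ioi 0)) atBot)
    (h h' : ℝ → ℝ) (hh : ∀ t ∈ Ioc 0 T, HasDerivAt h (h' t) t)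
    (hhpos : ∀ t ∈ Ioc 0 T, 0 < h t)
    (hhmono : AntitoneOn h (Ioc 0 T))
    (hhint : Tendsto (fun ε => ∫ s in ε..T, h s) (nhdsWithin 0 (Ioi 0)) atTop) :
    ∃ t : ℕ → ℝ, (∀ k, t k ∈ Ioc 0 T) ∧ StrictAnti t ∧
      Tendsto t atTop (nhds 0) ∧
      ∀ k, |f (t k)| ≤ h (t k) ∧ f' (t k) ≥ h' (t k) := by
  have good {δ : ℝ} (hδ : δ ∈ Ioc 0 T) :=
    exists_abs_le_and_deriv_le hδ hf hfint_top hfint_bot hh hhpos hhmono hhint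
  set S := {u ∈ Ioc 0 T | |f u| ≤ h u ∧ f' u ≥ h' u}
  have hS : IsGLB S 0 := by
    refine ⟨fun u hu => hu.1.1.le, fun b hb => not_lt.1 fun hb0 => ?_⟩
    obtain ⟨u, hu, hgood⟩ := good ⟨lt_min (half_pos hb0) hT, min_le_right _ T⟩
    have := hb ⟨⟨hu.1, hu.2.trans (min_le_right _ T)⟩, hgood⟩
    linarith [hu.2.trans (min_le_left _ T)]
  obtain ⟨u, hu, hgood⟩ := good ⟨hT, le_rfl⟩
  obtain ⟨t, hanti, -, hlim, htS⟩ :=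
    hS.exists_seq_strictAnti_tendsto_of_notMem (fun h0 => h0.1.1.false) ⟨u, hu, hgood⟩
  exact ⟨t, fun k => (htS k).1, hanti, hlim, fun k => (htS k).2⟩
end

section
/- Let $T > 0$ and let $f : (0,T] \to [0,\infty)$ be a non-negative differentiable function such that $\int_\varepsilon^T f(s)\,ds$ does not diverge to $+\infty$ as $\varepsilon \searrow 0$. Let $h : (0,T] \to (0,\infty)$ be a non-increasing differentiable function with $\int_0^T h(s)\,ds = +\infty$. Then there exists a sequence $t_k \searrow 0$ such that $f(t_k) \le h(t_k)$ and $|f'(t_k)| \le |h'(t_k)|$ for every $k$. -/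
open MeasureTheory Set Filter

-- derivative of an antitone function is nonpositive
theorem stmt3_deriv_nonpos (T : ℝ) (hT : 0 < T) (h h' : ℝ → ℝ)
    (hh : ∀ t ∈ Ioc 0 T, HasDerivAt h (h' t) t)
    (hhmono : AntitoneOn h (Ioc 0 T)) :
    ∀ t ∈ Ioc 0 T, h' t ≤ 0 := by
  intro t ht
  have h2 : (0:ℝ) < t / 2 := by linarith [ht.1]
  have htt : t / 2 < t := by linarith [ht.1]
  have hslope : Tendsto (slope h t) (nhdsWithin t (Iio t)) (nhds (h' t)) :=
    (hasDerivAt_iff_tendsto_slope.mp (hh t ht)).mono_left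
      (nhdsWithin_mono t (fun x hx => ne_of_lt hx))
  refine le_of_tendsto hslope ?_
  filter_upwards [Ioo_mem_nhdsLT_of_mem (⟨htt, le_refl t⟩ : t ∈ Ioc (t/2) t)] with s hs
  have hsmem : s ∈ Ioc 0 T := ⟨lt_trans h2 hs.1, (le_of_lt hs.2).trans ht.2⟩
  have hge : h t ≤ h s := hhmono hsmem ht (le_of_lt hs.2)
  rw [slope_def_field]
  apply div_nonpos_of_nonneg_of_nonpos <;> [linarith; linarith [hs.2]]

theorem stmt3_integrable (T : ℝ) (f f' : ℝ → ℝ)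
    (hf : ∀ t ∈ Ioc 0 T, HasDerivAt f (f' t) t) :
    ∀ a b : ℝ, 0 < a → a ≤ b → b ≤ T → IntervalIntegrable f volume a b := by
  intro a b ha hab hbT
  apply ContinuousOn.intervalIntegrable
  intro t ht
  rw [uIcc_of_le hab] at ht
  exact (hf t ⟨lt_of_lt_of_le ha ht.1, ht.2.trans hbT⟩).continuousAt.continuousWithinAt

theorem stmt3_bound (T : ℝ) (hT : 0 < T) (f f' : ℝ → ℝ)
    (hf : ∀ t ∈ Ioc 0 T, HasDerivAt f (f' t) t)
    (hfnonneg : ∀ t ∈ Ioc 0 T, 0 ≤ f t)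
    (hfint_top : ¬ Tendsto (fun ε => ∫ s in ε..T, f s) (nhdsWithin 0 (Ioi 0)) atTop) :
    ∃ M : ℝ, ∀ a ∈ Ioc 0 T, (∫ s in a..T, f s) ≤ M := by
  by_contra hc
  push_neg at hc
  apply hfint_top
  rw [tendsto_atTop]
  intro M
  obtain ⟨a, ha, hMa⟩ := hc M
  filter_upwards [Ioo_mem_nhdsGT_of_mem (⟨le_refl 0, ha.1⟩ : (0:ℝ) ∈ Ico 0 a)] with x hx
  have h1 : IntervalIntegrable f volume x a := stmt3_integrable T f f' hf x a hx.1 (le_of_lt hx.2) ha.2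
  have h2 : IntervalIntegrable f volume a T := stmt3_integrable T f f' hf a T ha.1 ha.2 le_rfl
  have hsplit : (∫ s in x..a, f s) + (∫ s in a..T, f s) = ∫ s in x..T, f s :=
    intervalIntegral.integral_add_adjacent_intervals h1 h2
  have hnn : 0 ≤ ∫ s in x..a, f s := by
    apply intervalIntegral.integral_nonneg (le_of_lt hx.2)
    intro u hu
    exact hfnonneg u ⟨lt_of_lt_of_le hx.1 hu.1, hu.2.trans ha.2⟩
  linarith

theorem stmt3_stepA (T : ℝ) (hT : 0 < T) (f f' : ℝ → ℝ)
    (hf : ∀ t ∈ Ioc 0 T, HasDerivAt f (f' t) t)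
    (hfnonneg : ∀ t ∈ Ioc 0 T, 0 ≤ f t)
    (h h' : ℝ → ℝ) (hh : ∀ t ∈ Ioc 0 T, HasDerivAt h (h' t) t)
    (hhint : Tendsto (fun ε => ∫ s in ε..T, h s) (nhdsWithin 0 (Ioi 0)) atTop)
    (M : ℝ) (hM : ∀ a ∈ Ioc 0 T, (∫ s in a..T, f s) ≤ M) :
    ∀ δ, 0 < δ → δ ≤ T → ∃ t, t ∈ Ioc 0 δ ∧ f t ≤ h t := by
  intro δ hδ hδT
  by_contra hcon
  push_neg at hcon
  -- h < f on Ioc 0 δ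
  have hev : ∀ᶠ a in nhdsWithin 0 (Ioi 0),
      (M + (∫ s in δ..T, h s) < ∫ s in a..T, h s) ∧ a ∈ Ioo (0:ℝ) δ := by
    refine (hhint.eventually (eventually_gt_atTop _)).and ?_
    exact eventually_mem_nhdsWithin.mono (fun x hx => hx) |>.and (eventually_nhdsWithin_of_eventually_nhds
      (tendsto_id.eventually_lt_const hδ)) |>.mono (fun x hx => ⟨hx.1, hx.2⟩)
  obtain ⟨a, hbig, ha⟩ := hev.exists
  have haT : a ∈ Ioc 0 T := ⟨ha.1, (le_of_lt ha.2).trans hδT⟩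
  have hintf1 := stmt3_integrable T f f' hf a δ ha.1 (le_of_lt ha.2) hδT
  have hintf2 := stmt3_integrable T f f' hf δ T hδ hδT le_rfl
  have hinth1 := stmt3_integrable T h h' hh a δ ha.1 (le_of_lt ha.2) hδT
  have hinth2 := stmt3_integrable T h h' hh δ T hδ hδT le_rfl
  have hsplith : (∫ s in a..δ, h s) + (∫ s in δ..T, h s) = ∫ s in a..T, h s :=
    intervalIntegral.integral_add_adjacent_intervals hinth1 hinth2
  have hsplitf : (∫ s in a..δ, f s) + (∫ s in δ..T, f s) = ∫ s in a..T, f s :=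
    intervalIntegral.integral_add_adjacent_intervals hintf1 hintf2
  have hmono : (∫ s in a..δ, h s) ≤ ∫ s in a..δ, f s := by
    apply intervalIntegral.integral_mono_on (le_of_lt ha.2) hinth1 hintf1
    intro u hu
    exact le_of_lt (hcon u ⟨lt_of_lt_of_le ha.1 hu.1, hu.2⟩)
  have hfnn : 0 ≤ ∫ s in δ..T, f s := by
    apply intervalIntegral.integral_nonneg hδT
    intro u hu
    exact hfnonneg u ⟨lt_of_lt_of_le hδ hu.1, hu.2⟩
  have := hM a haT
  linarith

theorem stmt3_key (T : ℝ) (hT : 0 < T)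
    (f f' : ℝ → ℝ) (hf : ∀ t ∈ Ioc 0 T, HasDerivAt f (f' t) t)
    (hfnonneg : ∀ t ∈ Ioc 0 T, 0 ≤ f t)
    (h h' : ℝ → ℝ) (hh : ∀ t ∈ Ioc 0 T, HasDerivAt h (h' t) t)
    (hhpos : ∀ t ∈ Ioc 0 T, 0 < h t)
    (hh'np : ∀ t ∈ Ioc 0 T, h' t ≤ 0)
    (hhint : Tendsto (fun ε => ∫ s in ε..T, h s) (nhdsWithin 0 (Ioi 0)) atTop)
    (M : ℝ) (hM : ∀ a ∈ Ioc 0 T, (∫ s in a..T, f s) ≤ M)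
    (hstepA : ∀ δ, 0 < δ → δ ≤ T → ∃ t, t ∈ Ioc 0 δ ∧ f t ≤ h t)
    (hfi : ∀ a b : ℝ, 0 < a → a ≤ b → b ≤ T → IntervalIntegrable f volume a b)
    (hhi : ∀ a b : ℝ, 0 < a → a ≤ b → b ≤ T → IntervalIntegrable h volume a b) :
    ∀ ε, 0 < ε → ε ≤ T →
      ∃ t, t ∈ Ioc 0 ε ∧ f t ≤ h t ∧ f' t + h' t ≤ 0 ∧ 0 ≤ f' t - h' t := by
  intro ε hε hεT
  by_contra hcon
  push_neg at hcon
  have hsub : Ioc 0 ε ⊆ Ioc 0 T := Ioc_subset_Ioc le_rfl hεT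
  -- the contradiction hypothesis, in convenient form
  have hyp : ∀ t ∈ Ioc 0 ε, f t ≤ h t → 0 < f' t + h' t ∨ f' t - h' t < 0 := by
    intro t ht hfh
    by_cases hr : f' t + h' t ≤ 0
    · exact Or.inr (hcon t ht hfh hr)
    · exact Or.inl (lt_of_not_ge hr)
  have hrq : ∀ t ∈ Ioc 0 T, f' t + h' t ≤ f' t - h' t := by
    intro t ht; linarith [hh'np t ht]
  have hrne : ∀ t ∈ Ioc 0 ε, f t ≤ h t → f' t + h' t ≠ 0 := by
    intro t ht hfh
    rcases hyp t ht hfh with h1 | h1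
    · exact ne_of_gt h1
    · exact ne_of_lt (lt_of_le_of_lt (le_of_eq rfl) (by linarith [hrq t (hsub ht)]))
  -- derivatives within Icc, for Darboux
  have hgderiv : ∀ (a b : ℝ), 0 < a → b ≤ T → ∀ x ∈ Icc a b,
      HasDerivWithinAt (fun t => f t + h t) (f' x + h' x) (Icc a b) x := by
    intro a b ha hb x hx
    exact ((hf x ⟨lt_of_lt_of_le ha hx.1, hx.2.trans hb⟩).add
      (hh x ⟨lt_of_lt_of_le ha hx.1, hx.2.trans hb⟩)).hasDerivWithinAt
  by_cases hcase : ∃ δ, δ ∈ Ioc 0 ε ∧ ∀ t ∈ Ioc 0 δ, f t ≤ h t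
  · -- Case (i): f ≤ h on a whole interval (0, δ]
    obtain ⟨δ, hδε, hall⟩ := hcase
    have hδT : δ ≤ T := hδε.2.trans hεT
    have hsubδ : Ioc 0 δ ⊆ Ioc 0 ε := Ioc_subset_Ioc le_rfl hδε.2
    have hrneδ : ∀ t ∈ Ioc 0 δ, f' t + h' t ≠ 0 := fun t ht =>
      hrne t (hsubδ ht) (hall t ht)
    have hδmem : δ ∈ Ioc 0 δ := ⟨hδε.1, le_rfl⟩
    rcases (hrneδ δ hδmem).lt_or_gt with hneg | hpos
    · -- (f+h)' < 0 on all of (0,δ]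
      have hrneg : ∀ t ∈ Ioc 0 δ, f' t + h' t < 0 := by
        intro t ht
        rcases (hrneδ t ht).lt_or_gt with h1 | h1
        · exact h1
        · exfalso
          have htδ : t < δ := lt_of_le_of_ne ht.2 (by rintro rfl; exact absurd hneg (not_lt.2 (le_of_lt h1)))
          obtain ⟨x, hx, hx0⟩ := exists_hasDerivWithinAt_eq_of_lt_of_gt (le_of_lt htδ)
            (hgderiv t δ ht.1 hδT) (show (0:ℝ) < f' t + h' t from h1) (show f' δ + h' δ < 0 from hneg)
          exact hrneδ x ⟨lt_trans ht.1 hx.1, le_of_lt hx.2⟩ hx0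
      have hqneg : ∀ t ∈ Ioc 0 δ, f' t - h' t < 0 := by
        intro t ht
        rcases hyp t (hsubδ ht) (hall t ht) with h1 | h1
        · exact absurd h1 (not_lt.2 (le_of_lt (hrneg t ht)))
        · exact h1
      -- p = f - h is strictly decreasing on (0,δ]
      have hanti : StrictAntiOn (fun t => f t - h t) (Ioc 0 δ) := by
        apply strictAntiOn_of_deriv_neg (convex_Ioc 0 δ)
        · intro x hx
          exact ((hf x ⟨hx.1, hx.2.trans hδT⟩).sub (hh x ⟨hx.1, hx.2.trans hδT⟩)).continuousAt.continuousWithinAt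
        · intro x hx
          rw [interior_Ioc] at hx
          rw [HasDerivAt.deriv (f := fun t => f t - h t) ((hf x ⟨hx.1, (le_of_lt hx.2).trans hδT⟩).sub (hh x ⟨hx.1, (le_of_lt hx.2).trans hδT⟩))]
          exact hqneg x ⟨hx.1, le_of_lt hx.2⟩
      have hb : ∀ t ∈ Ioc 0 δ, h t ≤ f t - (f δ - h δ) := by
        intro t ht
        rcases eq_or_lt_of_le ht.2 with rfl | hlt
        · linarith
        · have := hanti ht hδmem hlt
          simp only at this
          linarith
      -- get a contradiction with divergence of ∫ h
      set C := M + (-(f δ - h δ)) * δ + (∫ s in δ..T, h s) with hC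
      obtain ⟨a, hbig, ha⟩ := ((hhint.eventually (eventually_gt_atTop C)).and
        (eventually_of_mem (Ioo_mem_nhdsGT_of_mem (⟨le_refl 0, hδε.1⟩ : (0:ℝ) ∈ Ico 0 δ))
          (fun x hx => hx))).exists
      have hsplith : (∫ s in a..δ, h s) + (∫ s in δ..T, h s) = ∫ s in a..T, h s :=
        intervalIntegral.integral_add_adjacent_intervals (hhi a δ ha.1 (le_of_lt ha.2) hδT)
          (hhi δ T hδε.1 hδT le_rfl)
      have hintc : IntervalIntegrable (fun t => f t - (f δ - h δ)) volume a δ :=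
        (hfi a δ ha.1 (le_of_lt ha.2) hδT).sub intervalIntegrable_const
      have hmono2 : (∫ s in a..δ, h s) ≤ ∫ s in a..δ, (f s - (f δ - h δ)) := by
        apply intervalIntegral.integral_mono_on (le_of_lt ha.2)
          (hhi a δ ha.1 (le_of_lt ha.2) hδT) hintc
        intro u hu
        exact hb u ⟨lt_of_lt_of_le ha.1 hu.1, hu.2⟩
      have hconst : (∫ s in a..δ, (f s - (f δ - h δ)))
          = (∫ s in a..δ, f s) - (δ - a) * (f δ - h δ) := by
        rw [intervalIntegral.integral_sub (hfi a δ ha.1 (le_of_lt ha.2) hδT)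
          intervalIntegrable_const, intervalIntegral.integral_const, smul_eq_mul]
      have hsplitf : (∫ s in a..δ, f s) + (∫ s in δ..T, f s) = ∫ s in a..T, f s :=
        intervalIntegral.integral_add_adjacent_intervals (hfi a δ ha.1 (le_of_lt ha.2) hδT)
          (hfi δ T hδε.1 hδT le_rfl)
      have hfnn : 0 ≤ ∫ s in δ..T, f s := by
        apply intervalIntegral.integral_nonneg hδT
        intro u hu
        exact hfnonneg u ⟨lt_of_lt_of_le hδε.1 hu.1, hu.2⟩
      have hMa := hM a ⟨ha.1, ((le_of_lt ha.2).trans hδT)⟩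
      have hpδ : f δ - h δ ≤ 0 := by linarith [hall δ hδmem]
      have : (-(f δ - h δ)) * (δ - a) ≤ (-(f δ - h δ)) * δ := by
        apply mul_le_mul_of_nonneg_left (by linarith [ha.1]) (by linarith)
      rw [hC] at hbig
      nlinarith
    · -- (f+h)' > 0 on all of (0,δ]
      have hrpos : ∀ t ∈ Ioc 0 δ, 0 < f' t + h' t := by
        intro t ht
        rcases (hrneδ t ht).lt_or_gt with h1 | h1
        · exfalso
          have htδ : t < δ := lt_of_le_of_ne ht.2 (by rintro rfl; exact absurd hpos (not_lt.2 (le_of_lt h1)))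
          obtain ⟨x, hx, hx0⟩ := exists_hasDerivWithinAt_eq_of_gt_of_lt (le_of_lt htδ)
            (hgderiv t δ ht.1 hδT) (show f' t + h' t < 0 from h1) (show (0:ℝ) < f' δ + h' δ from hpos)
          exact hrneδ x ⟨lt_trans ht.1 hx.1, le_of_lt hx.2⟩ hx0
        · exact h1
      -- f + h is strictly increasing on (0,δ]
      have hmonog : StrictMonoOn (fun t => f t + h t) (Ioc 0 δ) := by
        apply strictMonoOn_of_deriv_pos (convex_Ioc 0 δ)
        · intro x hx
          exact ((hf x ⟨hx.1, hx.2.trans hδT⟩).add (hh x ⟨hx.1, hx.2.trans hδT⟩)).continuousAt.continuousWithinAt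
        · intro x hx
          rw [interior_Ioc] at hx
          rw [HasDerivAt.deriv (f := fun t => f t + h t) ((hf x ⟨hx.1, (le_of_lt hx.2).trans hδT⟩).add (hh x ⟨hx.1, (le_of_lt hx.2).trans hδT⟩))]
          exact hrpos x ⟨hx.1, le_of_lt hx.2⟩
      have hb : ∀ t ∈ Ioc 0 δ, h t ≤ f δ + h δ := by
        intro t ht
        have hfnn := hfnonneg t (hsub (hsubδ ht))
        rcases eq_or_lt_of_le ht.2 with rfl | hlt
        · linarith
        · have := hmonog ht hδmem hlt
          simp only at this
          linarith
      set C := (f δ + h δ) * δ + (∫ s in δ..T, h s) with hC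
      obtain ⟨a, hbig, ha⟩ := ((hhint.eventually (eventually_gt_atTop C)).and
        (eventually_of_mem (Ioo_mem_nhdsGT_of_mem (⟨le_refl 0, hδε.1⟩ : (0:ℝ) ∈ Ico 0 δ))
          (fun x hx => hx))).exists
      have hsplith : (∫ s in a..δ, h s) + (∫ s in δ..T, h s) = ∫ s in a..T, h s :=
        intervalIntegral.integral_add_adjacent_intervals (hhi a δ ha.1 (le_of_lt ha.2) hδT)
          (hhi δ T hδε.1 hδT le_rfl)
      have hmono2 : (∫ s in a..δ, h s) ≤ ∫ s in a..δ, (f δ + h δ) := by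
        apply intervalIntegral.integral_mono_on (le_of_lt ha.2)
          (hhi a δ ha.1 (le_of_lt ha.2) hδT) intervalIntegrable_const
        intro u hu
        exact hb u ⟨lt_of_lt_of_le ha.1 hu.1, hu.2⟩
      have hconst : (∫ s in a..δ, (f δ + h δ)) = (δ - a) * (f δ + h δ) := by
        rw [intervalIntegral.integral_const, smul_eq_mul]
      have hgnn : 0 ≤ f δ + h δ := by
        have := hfnonneg δ ⟨hδε.1, hδT⟩
        have := hhpos δ ⟨hδε.1, hδT⟩
        linarith
      have : (δ - a) * (f δ + h δ) ≤ δ * (f δ + h δ) :=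
        mul_le_mul_of_nonneg_right (by linarith [ha.1]) hgnn
      rw [hC] at hbig
      nlinarith
  · -- Case (ii): points with f > h accumulate at 0
    push_neg at hcase
    have hcase' : ∀ δ, δ ∈ Ioc 0 ε → ∃ t ∈ Ioc 0 δ, h t < f t := by
      intro δ hδ
      obtain ⟨t, ht, htl⟩ := hcase δ hδ
      exact ⟨t, ht, htl⟩
    obtain ⟨b₀, hb₀, hb₀gt⟩ := hcase' ε ⟨hε, le_rfl⟩
    obtain ⟨bm, hbm, hbmle⟩ := hstepA (b₀/2) (by linarith [hb₀.1]) (by linarith [hb₀.2, hεT])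
    obtain ⟨a, ha, hagt⟩ := hcase' (bm/2) ⟨by linarith [hbm.1], by linarith [hbm.2, hb₀.2, hb₀.1]⟩
    have habm : a < bm := by linarith [ha.2, hbm.1]
    have hbmb₀ : bm < b₀ := by linarith [hbm.2, hb₀.1]
    have hb₀T : b₀ ≤ T := hb₀.2.trans hεT
    have hpc : ∀ x y : ℝ, 0 < x → y ≤ T → ContinuousOn (fun t => f t - h t) (Icc x y) := by
      intro x y hx hy t ht
      exact ((hf t ⟨lt_of_lt_of_le hx ht.1, ht.2.trans hy⟩).sub
        (hh t ⟨lt_of_lt_of_le hx ht.1, ht.2.trans hy⟩)).continuousAt.continuousWithinAt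
    -- the first downcrossing c of f - h after a
    set S : Set ℝ := Icc a bm ∩ (fun t => f t - h t) ⁻¹' (Iic 0) with hS
    have hSclosed : IsClosed S :=
      (hpc a bm ha.1 (hbm.2.trans (by linarith))).preimage_isClosed_of_isClosed
        isClosed_Icc isClosed_Iic
    have hSne : S.Nonempty := ⟨bm, ⟨le_of_lt habm, le_rfl⟩, by simp; linarith⟩
    have hSbdd : BddBelow S := ⟨a, fun x hx => hx.1.1⟩
    set c := sInf S with hc
    have hcS : c ∈ S := hSclosed.csInf_mem hSne hSbdd
    have hca : a ≤ c := hcS.1.1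
    have hcbm : c ≤ bm := hcS.1.2
    have hcT : c ∈ Ioc 0 T := ⟨lt_of_lt_of_le ha.1 hca, hcbm.trans (hbm.2.trans (by linarith))⟩
    have hcε : c ∈ Ioc 0 ε := ⟨hcT.1, hcbm.trans (by linarith [hbm.2, hb₀.2, hb₀.1])⟩
    have hlt : ∀ t, a ≤ t → t < c → h t < f t := by
      intro t hta htc
      by_contra hle
      push_neg at hle
      have : t ∈ S := ⟨⟨hta, le_of_lt (lt_of_lt_of_le htc hcbm)⟩, by simp; linarith⟩
      exact absurd (csInf_le hSbdd this) (not_le.2 htc)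
    have hac : a < c := by
      rcases eq_or_lt_of_le hca with heq | hlt'
      · exfalso; have h2 := hcS.2; rw [← heq] at h2; simp at h2; linarith
      · exact hlt'
    have hpcle : f c - h c ≤ 0 := by have := hcS.2; simpa using this
    have hcont_c : Tendsto (fun t => f t - h t) (nhdsWithin c (Iio c)) (nhds (f c - h c)) :=
      (((hf c hcT).sub (hh c hcT)).continuousAt.tendsto).mono_left nhdsWithin_le_nhds
    have hpcge : 0 ≤ f c - h c := by
      refine ge_of_tendsto hcont_c ?_
      filter_upwards [Ioo_mem_nhdsLT_of_mem (⟨hac, le_refl c⟩ : c ∈ Ioc a c)] with t ht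
      linarith [hlt t (le_of_lt ht.1) ht.2]
    have hpc0 : f c - h c = 0 := le_antisymm hpcle hpcge
    have hderivp : HasDerivAt (fun t => f t - h t) (f' c - h' c) c := (hf c hcT).sub (hh c hcT)
    have hqcle : f' c - h' c ≤ 0 := by
      have hsl : Tendsto (slope (fun t => f t - h t) c) (nhdsWithin c (Iio c))
          (nhds (f' c - h' c)) :=
        (hasDerivAt_iff_tendsto_slope.mp hderivp).mono_left
          (nhdsWithin_mono c (fun x hx => ne_of_lt hx))
      refine le_of_tendsto hsl ?_
      filter_upwards [Ioo_mem_nhdsLT_of_mem (⟨hac, le_refl c⟩ : c ∈ Ioc a c)] with t ht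
      rw [slope_def_field]
      apply div_nonpos_of_nonneg_of_nonpos
      · have := hlt t (le_of_lt ht.1) ht.2; linarith
      · linarith [ht.2]
    have hqc : f' c - h' c < 0 := by
      rcases hyp c hcε (by linarith) with h1 | h1
      · linarith [hrq c hcT]
      · exact h1
    have hrc : f' c + h' c < 0 := lt_of_le_of_lt (hrq c hcT) hqc
    -- f - h is negative just to the right of c
    have hcb₀ : c < b₀ := lt_of_le_of_lt hcbm hbmb₀
    have hslr : Tendsto (slope (fun t => f t - h t) c) (nhdsWithin c (Ioi c))
        (nhds (f' c - h' c)) :=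
      (hasDerivAt_iff_tendsto_slope.mp hderivp).mono_left
        (nhdsWithin_mono c (fun x hx => ne_of_gt hx))
    have hev : ∀ᶠ t in nhdsWithin c (Ioi c), slope (fun t => f t - h t) c t < 0 :=
      hslr.eventually (gt_mem_nhds hqc)
    rw [eventually_nhdsWithin_iff, Metric.eventually_nhds_iff] at hev
    obtain ⟨η, hη, hball⟩ := hev
    set c' := min (c + η/2) ((c + b₀)/2) with hc'
    have hcc' : c < c' := lt_min (by linarith) (by linarith)
    have hc'b₀ : c' < b₀ := lt_of_le_of_lt (min_le_right _ _) (by linarith)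
    have hneg1 : ∀ t, c < t → t ≤ c' → f t - h t < 0 := by
      intro t htc htc'
      have hd : dist t c < η := by
        rw [Real.dist_eq, abs_of_pos (by linarith)]
        have : c' ≤ c + η/2 := min_le_left _ _
        linarith
      have hsl := hball hd (show t ∈ Ioi c from htc)
      rw [slope_def_field] at hsl
      have h2 : (f t - h t) - (f c - h c) < 0 := by
        have := mul_neg_of_neg_of_pos hsl (show (0:ℝ) < t - c by linarith)
        rwa [div_mul_cancel₀] at this
        linarith
      linarith
    -- the first return u of f - h to 0 after c
    set K : Set ℝ := Icc c' b₀ ∩ (fun t => f t - h t) ⁻¹' (Ici 0) with hK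
    have hKclosed : IsClosed K :=
      (hpc c' b₀ (lt_trans hcT.1 hcc') hb₀T).preimage_isClosed_of_isClosed
        isClosed_Icc isClosed_Ici
    have hKne : K.Nonempty := ⟨b₀, ⟨le_of_lt hc'b₀, le_rfl⟩, by simp; linarith⟩
    have hKbdd : BddBelow K := ⟨c', fun x hx => hx.1.1⟩
    set u := sInf K with hu
    have huK : u ∈ K := hKclosed.csInf_mem hKne hKbdd
    have hc'u : c' ≤ u := huK.1.1
    have hub₀ : u ≤ b₀ := huK.1.2
    have hpu : 0 ≤ f u - h u := by have := huK.2; simpa using this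
    have hc'K : c' ∉ K := by
      intro hmem
      have := hmem.2; simp at this
      linarith [hneg1 c' hcc' le_rfl]
    have hc'ult : c' < u := lt_of_le_of_ne hc'u (fun he => hc'K (he ▸ huK))
    have hcu : c < u := lt_trans hcc' hc'ult
    have hneg2 : ∀ t, c < t → t < u → f t - h t < 0 := by
      intro t htc htu
      by_cases hle : t ≤ c'
      · exact hneg1 t htc hle
      · push_neg at hle
        by_contra hge
        push_neg at hge
        have : t ∈ K := ⟨⟨le_of_lt hle, (le_of_lt htu).trans hub₀⟩, by simp; linarith⟩
        exact absurd (csInf_le hKbdd this) (not_le.2 htu)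
    have huT : u ∈ Ioc 0 T := ⟨lt_trans hcT.1 hcu, hub₀.trans hb₀T⟩
    have huε : u ∈ Ioc 0 ε := ⟨huT.1, hub₀.trans hb₀.2⟩
    have hcont_u : Tendsto (fun t => f t - h t) (nhdsWithin u (Iio u)) (nhds (f u - h u)) :=
      (((hf u huT).sub (hh u huT)).continuousAt.tendsto).mono_left nhdsWithin_le_nhds
    have hpule : f u - h u ≤ 0 := by
      refine le_of_tendsto hcont_u ?_
      filter_upwards [Ioo_mem_nhdsLT_of_mem (⟨hcu, le_refl u⟩ : u ∈ Ioc c u)] with t ht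
      linarith [hneg2 t ht.1 ht.2]
    have hpu0 : f u - h u = 0 := le_antisymm hpule hpu
    have hderivpu : HasDerivAt (fun t => f t - h t) (f' u - h' u) u := (hf u huT).sub (hh u huT)
    have hquge : 0 ≤ f' u - h' u := by
      have hsl : Tendsto (slope (fun t => f t - h t) u) (nhdsWithin u (Iio u))
          (nhds (f' u - h' u)) :=
        (hasDerivAt_iff_tendsto_slope.mp hderivpu).mono_left
          (nhdsWithin_mono u (fun x hx => ne_of_lt hx))
      refine ge_of_tendsto hsl ?_
      filter_upwards [Ioo_mem_nhdsLT_of_mem (⟨hcu, le_refl u⟩ : u ∈ Ioc c u)] with t ht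
      rw [slope_def_field]
      apply div_nonneg_iff.mpr
      refine Or.inr ⟨?_, ?_⟩
      · linarith [hneg2 t ht.1 ht.2]
      · linarith [ht.2]
    have hru : 0 < f' u + h' u := by
      rcases hyp u huε (by linarith) with h1 | h1
      · exact h1
      · linarith
    -- Darboux on [c, u] for (f+h)'
    obtain ⟨x, hx, hx0⟩ := exists_hasDerivWithinAt_eq_of_gt_of_lt (le_of_lt hcu)
      (hgderiv c u hcT.1 huT.2) hrc hru
    have hxT : x ∈ Ioc 0 T := ⟨lt_trans hcT.1 hx.1, (le_of_lt hx.2).trans huT.2⟩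
    have hxε : x ∈ Ioc 0 ε := ⟨hxT.1, (le_of_lt hx.2).trans huε.2⟩
    have hpx : f x - h x < 0 := hneg2 x hx.1 hx.2
    have hx0' : f' x + h' x = 0 := hx0
    rcases hyp x hxε (by linarith) with h1 | h1
    · rw [hx0'] at h1; exact lt_irrefl 0 h1
    · linarith [hrq x hxT]

/-- Auxiliary recursive sequence. -/
noncomputable def stmt3_seq (F : ℝ → ℝ) (T : ℝ) : ℕ → ℝ
  | 0 => F T
  | (k+1) => F (stmt3_seq F T k / 2)

theorem stmt3_final (T : ℝ) (hT : 0 < T)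
    (f f' h h' : ℝ → ℝ)
    (key : ∀ ε, 0 < ε → ∃ t, 0 < t ∧ t ≤ ε ∧ t ≤ T ∧ f t ≤ h t ∧ |f' t| ≤ |h' t|) :
    ∃ t : ℕ → ℝ, (∀ k, t k ∈ Ioc 0 T) ∧ StrictAnti t ∧
      Tendsto t atTop (nhds 0) ∧
      ∀ k, f (t k) ≤ h (t k) ∧ |f' (t k)| ≤ |h' (t k)| := by
  have key2 : ∀ ε : ℝ, ∃ t : ℝ, 0 < ε →
      (0 < t ∧ t ≤ ε ∧ t ≤ T ∧ f t ≤ h t ∧ |f' t| ≤ |h' t|) := by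
    intro ε
    by_cases hε : 0 < ε
    · obtain ⟨t, ht⟩ := key ε hε
      exact ⟨t, fun _ => ht⟩
    · exact ⟨0, fun hc => absurd hc hε⟩
  choose F hF using key2
  set u := stmt3_seq F T with hu
  have hpos : ∀ k, 0 < u k ∧ u k ≤ T := by
    intro k
    induction k with
    | zero =>
      have := hF T hT
      exact ⟨this.1, this.2.1⟩
    | succ n ih =>
      have h2 : (0:ℝ) < u n / 2 := by linarith [ih.1]
      have := hF (u n / 2) h2
      exact ⟨this.1, this.2.2.1⟩
  have hstep : ∀ k, u (k+1) ≤ u k / 2 := by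
    intro k
    have h2 : (0:ℝ) < u k / 2 := by linarith [(hpos k).1]
    exact (hF (u k / 2) h2).2.1
  have hcond : ∀ k, f (u k) ≤ h (u k) ∧ |f' (u k)| ≤ |h' (u k)| := by
    intro k
    cases k with
    | zero => exact ⟨(hF T hT).2.2.2.1, (hF T hT).2.2.2.2⟩
    | succ n =>
      have h2 : (0:ℝ) < u n / 2 := by linarith [(hpos n).1]
      exact ⟨(hF (u n / 2) h2).2.2.2.1, (hF (u n / 2) h2).2.2.2.2⟩
  refine ⟨u, fun k => ⟨(hpos k).1, (hpos k).2⟩, ?_, ?_, hcond⟩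
  · apply strictAnti_nat_of_succ_lt
    intro k
    calc u (k+1) ≤ u k / 2 := hstep k
    _ < u k := by linarith [(hpos k).1]
  · have hle : ∀ k, u k ≤ T * (1/2)^k := by
      intro k
      induction k with
      | zero => simpa using (hpos 0).2
      | succ n ih =>
        calc u (n+1) ≤ u n / 2 := hstep n
        _ ≤ T * (1/2)^n / 2 := by linarith
        _ = T * (1/2)^(n+1) := by ring
    apply squeeze_zero (fun k => le_of_lt (hpos k).1) hle
    have : Tendsto (fun k : ℕ => (1/2:ℝ)^k) atTop (nhds 0) :=
      tendsto_pow_atTop_nhds_zero_of_lt_one (by norm_num) (by norm_num)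
    simpa using this.const_mul T

/-- For nonnegative `f`, one can extract a sequence `t_k ↘ 0` with
`f(t_k) ≤ h(t_k)` and `|f'(t_k)| ≤ |h'(t_k)|`. -/
theorem stmt_3 (T : ℝ) (hT : 0 < T)
    (f f' : ℝ → ℝ) (hf : ∀ t ∈ Ioc 0 T, HasDerivAt f (f' t) t)
    (hfnonneg : ∀ t ∈ Ioc 0 T, 0 ≤ f t)
    (hfint_top : ¬ Tendsto (fun ε => ∫ s in ε..T, f s) (nhdsWithin 0 (Ioi 0)) atTop)
    (h h' : ℝ → ℝ) (hh : ∀ t ∈ Ioc 0 T, HasDerivAt h (h' t) t)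
    (hhpos : ∀ t ∈ Ioc 0 T, 0 < h t)
    (hhmono : AntitoneOn h (Ioc 0 T))
    (hhint : Tendsto (fun ε => ∫ s in ε..T, h s) (nhdsWithin 0 (Ioi 0)) atTop) :
    ∃ t : ℕ → ℝ, (∀ k, t k ∈ Ioc 0 T) ∧ StrictAnti t ∧
      Tendsto t atTop (nhds 0) ∧
      ∀ k, f (t k) ≤ h (t k) ∧ |f' (t k)| ≤ |h' (t k)| := by
  have hh'np := stmt3_deriv_nonpos T hT h h' hh hhmono
  have hfi := stmt3_integrable T f f' hf
  have hhi := stmt3_integrable T h h' hh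
  obtain ⟨M, hM⟩ := stmt3_bound T hT f f' hf hfnonneg hfint_top
  have hstepA := stmt3_stepA T hT f f' hf hfnonneg h h' hh hhint M hM
  have key0 := stmt3_key T hT f f' hf hfnonneg h h' hh hhpos hh'np hhint M hM hstepA hfi hhi
  have key : ∀ ε, 0 < ε → ∃ t, 0 < t ∧ t ≤ ε ∧ t ≤ T ∧ f t ≤ h t ∧ |f' t| ≤ |h' t| := by
    intro ε hε
    obtain ⟨t, ht, h1, h2, h3⟩ := key0 (min ε T) (lt_min hε hT) (min_le_right _ _)
    have htT : t ∈ Ioc 0 T := ⟨ht.1, ht.2.trans (min_le_right _ _)⟩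
    have habs : |f' t| ≤ |h' t| := by
      rw [abs_of_nonpos (hh'np t htT)]
      exact abs_le.2 ⟨by linarith, by linarith⟩
    exact ⟨t, ht.1, ht.2.trans (min_le_left _ _), ht.2.trans (min_le_right _ _), h1, habs⟩
  exact stmt3_final T hT f f' h h' key
end

section
/- For $\kappa > 0$ define the vector fields on $\mathbb{R}^2$: $\sigma = (\sqrt{\kappa}, 0)$ and $b(x,z) = \big(-\tfrac12 x - \tfrac{2x}{x^2 + e^{2z}},\; -\tfrac12 + \tfrac{2}{x^2 + e^{2z}}\big)$. Then for every $(x,z) \in \mathbb{R}^2$ with $x \ne 0$, the vectors $\sigma$ and $[\sigma, b](x,z)$ span $\mathbb{R}^2$, and for $x = 0$ the vectors $\sigma$ and $[\sigma, [\sigma, b]](x,z)$ span $\mathbb{R}^2$. Here $[U,V](x) = DV(x)U(x) - DU(x)V(x)$ is the Lie bracket. -/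
open Set

private lemma my_div {f g : ℝ×ℝ → ℝ} {f' g' : ℝ×ℝ →L[ℝ] ℝ} {p : ℝ×ℝ}
    (hf : HasFDerivAt f f' p) (hg : HasFDerivAt g g' p) (hgne : g p ≠ 0) :
    HasFDerivAt (fun q => f q / g q)
      ((g p)⁻¹ • f' - (f p * ((g p)^2)⁻¹) • g') p := by
  have hinv : HasFDerivAt (fun q => (g q)⁻¹) ((-((g p)^2)⁻¹) • g') p :=
    (hasDerivAt_inv hgne).comp_hasFDerivAt p hg
  have h3 : HasFDerivAt (fun q => f q * (g q)⁻¹)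
      ((g p)⁻¹ • f' - (f p * ((g p)^2)⁻¹) • g') p :=
    (hf.mul hinv).congr_fderiv (by module)
  exact h3.congr_of_eventuallyEq (Filter.Eventually.of_forall fun q => (div_eq_mul_inv _ _))

private noncomputable abbrev fstL : ℝ×ℝ →L[ℝ] ℝ := ContinuousLinearMap.fst ℝ ℝ ℝ
private noncomputable abbrev sndL : ℝ×ℝ →L[ℝ] ℝ := ContinuousLinearMap.snd ℝ ℝ ℝ

/-- derivative of the squared-function `x²` component. -/
private lemma hasX2 (p : ℝ×ℝ) :
    HasFDerivAt (fun q : ℝ×ℝ => q.1 ^ 2) (((2:ℝ)*p.1) • fstL) p := by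
  simp only [pow_two]
  exact ((hasFDerivAt_fst (p := p)).mul (hasFDerivAt_fst (p := p))).congr_fderiv (by module)

/-- derivative of `exp (2 z)`. -/
private lemma hasE (p : ℝ×ℝ) :
    HasFDerivAt (fun q : ℝ×ℝ => Real.exp (2 * q.2))
      ((2 * Real.exp (2 * p.2)) • sndL) p := by
  have hz : HasFDerivAt (fun q : ℝ × ℝ => 2 * q.2) ((2:ℝ) • sndL) p :=
    (hasFDerivAt_snd).const_mul 2
  refine ((Real.hasDerivAt_exp (2 * p.2)).comp_hasFDerivAt p hz).congr_fderiv ?_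
  module

/-- derivative of the denominator `D = x² + exp (2z)`. -/
private lemma hasD (p : ℝ×ℝ) :
    HasFDerivAt (fun q : ℝ×ℝ => q.1 ^ 2 + Real.exp (2 * q.2))
      (((2:ℝ)*p.1) • fstL + (2 * Real.exp (2 * p.2)) • sndL) p :=
  (hasX2 p).add (hasE p)

private lemma Dpos (p : ℝ×ℝ) : (0:ℝ) < p.1 ^ 2 + Real.exp (2 * p.2) := by positivity

/-- The first Lie bracket `[σ, b] = √κ ∂ₓ b`, written explicitly. -/
private noncomputable def gg (s : ℝ) : ℝ × ℝ → ℝ × ℝ := fun p =>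
  (s * (-(1/2) - 2 * (Real.exp (2 * p.2) - p.1 ^ 2) /
      ((p.1 ^ 2 + Real.exp (2 * p.2)) * (p.1 ^ 2 + Real.exp (2 * p.2)))),
   s * (-4 * p.1 / ((p.1 ^ 2 + Real.exp (2 * p.2)) * (p.1 ^ 2 + Real.exp (2 * p.2)))))

/-- The directional derivative of `b` in direction `(s,0)` equals `gg s`. -/
private lemma bval (s : ℝ) (p : ℝ × ℝ) :
    fderiv ℝ (fun p : ℝ×ℝ =>
      ((-(1/2) * p.1 - 2 * p.1 / (p.1 ^ 2 + Real.exp (2 * p.2)),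
        -(1/2) + 2 / (p.1 ^ 2 + Real.exp (2 * p.2))) : ℝ × ℝ)) p (s, 0) = gg s p := by
  have hDne := (Dpos p).ne'
  have hnum1 : HasFDerivAt (fun q : ℝ×ℝ => 2 * q.1) ((2:ℝ) • fstL) p :=
    (hasFDerivAt_fst).const_mul 2
  have hdiv1 := my_div hnum1 (hasD p) hDne
  have hlin1 : HasFDerivAt (fun q : ℝ×ℝ => -(1/2) * q.1) ((-(1/2) : ℝ) • fstL) p :=
    (hasFDerivAt_fst).const_mul (-(1/2))
  have hb1 := hlin1.sub hdiv1
  have hdiv2 := my_div (hasFDerivAt_const (2:ℝ) p) (hasD p) hDne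
  have hb2 := (hasFDerivAt_const (-(1/2) : ℝ) p).add hdiv2
  have hb : HasFDerivAt (fun p : ℝ×ℝ =>
      ((-(1/2) * p.1 - 2 * p.1 / (p.1 ^ 2 + Real.exp (2 * p.2)),
        -(1/2) + 2 / (p.1 ^ 2 + Real.exp (2 * p.2))) : ℝ × ℝ)) _ p := hb1.prodMk hb2
  rw [hb.fderiv]
  have hD2 : (p.1 ^ 2 + Real.exp (2 * p.2)) ≠ 0 := hDne
  simp only [gg, ContinuousLinearMap.prod_apply, ContinuousLinearMap.coe_sub',
    ContinuousLinearMap.coe_add', Pi.sub_apply, Pi.add_apply,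
    ContinuousLinearMap.coe_smul', Pi.smul_apply, fstL, sndL,
    ContinuousLinearMap.coe_fst', ContinuousLinearMap.coe_snd',
    ContinuousLinearMap.zero_apply, smul_eq_mul, Prod.mk.injEq]
  constructor <;> field_simp <;> ring

/-- The derivative of `gg s` at the given point. -/
private lemma ggHasDeriv (s : ℝ) (p : ℝ × ℝ) :
    HasFDerivAt (gg s)
      ((s • -(((p.1 ^ 2 + Real.exp (2 * p.2)) * (p.1 ^ 2 + Real.exp (2 * p.2)))⁻¹ •
            ((2:ℝ) • (((2 * Real.exp (2 * p.2)) • sndL) - ((2:ℝ)*p.1) • fstL)) -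
          ((2 * (Real.exp (2 * p.2) - p.1 ^ 2)) *
            (((p.1 ^ 2 + Real.exp (2 * p.2)) * (p.1 ^ 2 + Real.exp (2 * p.2)))^2)⁻¹) •
            ((p.1 ^ 2 + Real.exp (2 * p.2)) • (((2:ℝ)*p.1) • fstL + (2 * Real.exp (2 * p.2)) • sndL)
              + (p.1 ^ 2 + Real.exp (2 * p.2)) • (((2:ℝ)*p.1) • fstL + (2 * Real.exp (2 * p.2)) • sndL)))).prod
       (s • (((p.1 ^ 2 + Real.exp (2 * p.2)) * (p.1 ^ 2 + Real.exp (2 * p.2)))⁻¹ •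
            (((-4):ℝ) • fstL) -
          ((-4 * p.1) *
            (((p.1 ^ 2 + Real.exp (2 * p.2)) * (p.1 ^ 2 + Real.exp (2 * p.2)))^2)⁻¹) •
            ((p.1 ^ 2 + Real.exp (2 * p.2)) • (((2:ℝ)*p.1) • fstL + (2 * Real.exp (2 * p.2)) • sndL)
              + (p.1 ^ 2 + Real.exp (2 * p.2)) • (((2:ℝ)*p.1) • fstL + (2 * Real.exp (2 * p.2)) • sndL))))) p := by
  have hDne := (Dpos p).ne'
  have hDDne : ((p.1 ^ 2 + Real.exp (2 * p.2)) * (p.1 ^ 2 + Real.exp (2 * p.2))) ≠ 0 :=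
    mul_ne_zero hDne hDne
  have hden : HasFDerivAt
      (fun q : ℝ×ℝ => (q.1 ^ 2 + Real.exp (2 * q.2)) * (q.1 ^ 2 + Real.exp (2 * q.2)))
      ((p.1 ^ 2 + Real.exp (2 * p.2)) • (((2:ℝ)*p.1) • fstL + (2 * Real.exp (2 * p.2)) • sndL)
        + (p.1 ^ 2 + Real.exp (2 * p.2)) • (((2:ℝ)*p.1) • fstL + (2 * Real.exp (2 * p.2)) • sndL)) p :=
    (hasD p).mul (hasD p)
  have hnum1 : HasFDerivAt (fun q : ℝ×ℝ => 2 * (Real.exp (2 * q.2) - q.1 ^ 2))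
      ((2:ℝ) • (((2 * Real.exp (2 * p.2)) • sndL) - ((2:ℝ)*p.1) • fstL)) p :=
    ((hasE p).sub (hasX2 p)).const_mul 2
  have hnum2 : HasFDerivAt (fun q : ℝ×ℝ => -4 * q.1) (((-4):ℝ) • fstL) p :=
    (hasFDerivAt_fst).const_mul (-4)
  have hg1 := ((my_div hnum1 hden hDDne).const_sub (-(1/2))).const_mul s
  have hg2 := (my_div hnum2 hden hDDne).const_mul s
  exact (hg1.prodMk hg2).congr_of_eventuallyEq (Filter.Eventually.of_forall fun q => rfl)

/-- Second component of the second bracket at `x = 0` is `-4 s² / E²`. -/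
private lemma gval (s : ℝ) (p : ℝ × ℝ) (h0 : p.1 = 0) :
    (fderiv ℝ (gg s) p (s, 0)).2 =
      -(4 * s ^ 2) * ((Real.exp (2 * p.2)) * Real.exp (2 * p.2))⁻¹ := by
  rw [(ggHasDeriv s p).fderiv]
  simp only [ContinuousLinearMap.prod_apply, ContinuousLinearMap.coe_sub',
    ContinuousLinearMap.coe_add', Pi.sub_apply, Pi.add_apply, ContinuousLinearMap.neg_apply,
    ContinuousLinearMap.coe_smul', Pi.smul_apply, fstL, sndL,
    ContinuousLinearMap.coe_fst', ContinuousLinearMap.coe_snd', smul_eq_mul, h0]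
  field_simp
  ring

/-- span of `(a,0)` and `w` with `a ≠ 0`, `w.2 ≠ 0` is everything. -/
private lemma span_aux (a : ℝ) (w : ℝ × ℝ) (ha : a ≠ 0) (hw : w.2 ≠ 0) :
    Submodule.span ℝ {((a, 0) : ℝ × ℝ), w} = ⊤ := by
  rw [eq_top_iff]
  rintro ⟨x, y⟩ -
  have h1 : ((a, 0) : ℝ × ℝ) ∈ Submodule.span ℝ {((a, 0) : ℝ × ℝ), w} :=
    Submodule.subset_span (by simp)
  have h2 : w ∈ Submodule.span ℝ {((a, 0) : ℝ × ℝ), w} :=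
    Submodule.subset_span (by simp)
  have hxy : ((x, y) : ℝ × ℝ) =
      (x / a - w.1 * y / (a * w.2)) • ((a, 0) : ℝ × ℝ) + (y / w.2) • w := by
    refine Prod.ext ?_ ?_ <;> simp [Prod.smul_def] <;> field_simp <;> ring
  rw [hxy]
  exact Submodule.add_mem _ (Submodule.smul_mem _ _ h1) (Submodule.smul_mem _ _ h2)

/-- Hörmander condition for the rescaled reverse SLE diffusion: with
`σ = (√κ, 0)` and the drift `b`, the vectors `σ, [σ,b]` span `ℝ²` when `x ≠ 0`,
and `σ, [σ,[σ,b]]` span `ℝ²` when `x = 0`. Here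
`[U,V](p) = DV(p) U(p) - DU(p) V(p)`. -/
theorem stmt_9 (κ : ℝ) (hκ : 0 < κ)
    (σ b : ℝ × ℝ → ℝ × ℝ)
    (hσ : σ = fun _ => (Real.sqrt κ, 0))
    (hb : b = fun p =>
      (-(1/2) * p.1 - 2 * p.1 / (p.1 ^ 2 + Real.exp (2 * p.2)),
        -(1/2) + 2 / (p.1 ^ 2 + Real.exp (2 * p.2))))
    (lie : (ℝ × ℝ → ℝ × ℝ) → (ℝ × ℝ → ℝ × ℝ) → (ℝ × ℝ → ℝ × ℝ))
    (hlie : ∀ U V p, lie U V p = fderiv ℝ V p (U p) - fderiv ℝ U p (V p)) :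
    ∀ p : ℝ × ℝ,
      (p.1 ≠ 0 → Submodule.span ℝ {σ p, lie σ b p} = (⊤ : Submodule ℝ (ℝ × ℝ))) ∧
      (p.1 = 0 → Submodule.span ℝ {σ p, lie σ (lie σ b) p} = (⊤ : Submodule ℝ (ℝ × ℝ))) := by
  subst hσ hb
  set s := Real.sqrt κ with hs
  have hsne : s ≠ 0 := (Real.sqrt_pos.mpr hκ).ne'
  have hσ0 : ∀ q : ℝ × ℝ, fderiv ℝ (fun _ : ℝ × ℝ => ((s, 0) : ℝ × ℝ)) q = 0 :=
    fun q => fderiv_const_apply _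
  have hgg : lie (fun _ => ((s, 0) : ℝ × ℝ))
      (fun p : ℝ×ℝ => ((-(1/2) * p.1 - 2 * p.1 / (p.1 ^ 2 + Real.exp (2 * p.2)),
        -(1/2) + 2 / (p.1 ^ 2 + Real.exp (2 * p.2))) : ℝ × ℝ)) = gg s := by
    funext q
    rw [hlie, hσ0]
    simpa using bval s q
  intro p
  constructor
  · intro hx
    have hDne := (Dpos p).ne'
    simp only [hgg]
    refine span_aux s (gg s p) hsne ?_
    have : (gg s p).2 = s * (-4 * p.1 /
        ((p.1 ^ 2 + Real.exp (2 * p.2)) * (p.1 ^ 2 + Real.exp (2 * p.2)))) := rfl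
    rw [this]
    exact mul_ne_zero hsne (div_ne_zero (by simpa using hx) (mul_ne_zero hDne hDne))
  · intro hx
    have hE : Real.exp (2 * p.2) ≠ 0 := (Real.exp_pos _).ne'
    have hval : lie (fun _ => ((s, 0) : ℝ × ℝ))
        (lie (fun _ => ((s, 0) : ℝ × ℝ))
          (fun p : ℝ×ℝ => ((-(1/2) * p.1 - 2 * p.1 / (p.1 ^ 2 + Real.exp (2 * p.2)),
            -(1/2) + 2 / (p.1 ^ 2 + Real.exp (2 * p.2))) : ℝ × ℝ))) p
        = fderiv ℝ (gg s) p (s, 0) := by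
      rw [hlie, hgg, hσ0]
      simp
    rw [hval]
    refine span_aux s _ hsne ?_
    rw [gval s p hx]
    have : (0:ℝ) < 4 * s ^ 2 := by positivity
    exact mul_ne_zero (by linarith) (inv_ne_zero (mul_ne_zero hE hE))
end

section
/- For $\kappa > 0$ and $V(x,z) := x^2 + \log(1 + z^2)$ on $\mathbb{R}^2$, let $L$ be the operator $Lf = \tfrac{\kappa}{2}\partial_{xx}f + \big(-\tfrac12 x - \tfrac{2x}{x^2+e^{2z}}\big)\partial_x f + \big(-\tfrac12 + \tfrac{2}{x^2+e^{2z}}\big)\partial_z f$. Then for all $(x,z) \in \mathbb{R}^2$: $LV(x,z) \le \kappa + 3 - \Big(x^2 + \frac{4|z|\,\mathbbm{1}(z \le 0)}{(x^2+e^{2z})(1+z^2)}\Big)$. -/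
/-!
Only `x ↦ x²` and `z ↦ log (1 + z²)` are differentiated, so with `A = x² + e^{2z}` and
`B = 1 + z²` one gets `LV = κ - x² - 4x²/A - z/B + 4z/(AB)`. The term `-4x²/A` is
nonpositive and `|z|/B ≤ 1/2`. For `z ≤ 0` the last term is `-4|z|/(AB)` and `-z/B ≤ 1/2`;
for `z > 0` we have `A ≥ 1`, so `4z/(AB) ≤ 4z/B ≤ 2` while `-z/B ≤ 0`.
-/

open Real

lemma abs_div_one_add_sq_le_half (z : ℝ) : |z| / (1 + z ^ 2) ≤ 1 / 2 := by
  rw [div_le_iff₀ (by positivity)]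
  nlinarith [sq_nonneg (|z| - 1), sq_abs z]

lemma one_le_sq_add_exp_two_mul (x : ℝ) {z : ℝ} (hz : 0 ≤ z) : 1 ≤ x ^ 2 + exp (2 * z) := by
  have : 1 ≤ exp (2 * z) := one_le_exp (by linarith)
  nlinarith [sq_nonneg x]

lemma hasDerivAt_log_one_add_sq (z : ℝ) :
    HasDerivAt (fun z => log (1 + z ^ 2)) (2 * z / (1 + z ^ 2)) z := by
  simpa using ((hasDerivAt_pow 2 z).const_add 1).log (by positivity)

lemma lyapunov_drift_eq (κ x z A B : ℝ) (hA : A ≠ 0) (hB : B ≠ 0) :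
    κ / 2 * 2 + (-(1 / 2) * x - 2 * x / A) * (2 * x) + (-(1 / 2) + 2 / A) * (2 * z / B)
      = κ - x ^ 2 - 4 * (x ^ 2 / A) - z / B + 4 * (z / (A * B)) := by
  field_simp
  ring

lemma lyapunov_drift_le (κ x z : ℝ) :
    κ / 2 * 2 + (-(1 / 2) * x - 2 * x / (x ^ 2 + exp (2 * z))) * (2 * x)
        + (-(1 / 2) + 2 / (x ^ 2 + exp (2 * z))) * (2 * z / (1 + z ^ 2))
      ≤ κ + 3 - (x ^ 2 + 4 * |z| * (if z ≤ 0 then (1 : ℝ) else 0)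
          / ((x ^ 2 + exp (2 * z)) * (1 + z ^ 2))) := by
  set A := x ^ 2 + exp (2 * z)
  set B := 1 + z ^ 2
  have hA : 0 < A := by positivity
  have hB : 0 < B := by positivity
  rw [lyapunov_drift_eq κ x z A B hA.ne' hB.ne']
  have hxA : 0 ≤ x ^ 2 / A := by positivity
  have hzB := abs_div_one_add_sq_le_half z
  rcases le_or_gt z 0 with hz | hz
  · rw [abs_of_nonpos hz, neg_div] at hzB
    rw [if_pos hz, abs_of_nonpos hz, mul_one, mul_neg, neg_div, mul_div_assoc]
    linarith
  · have hAB : z / (A * B) ≤ z / B :=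
      div_le_div_of_nonneg_left hz.le hB (le_mul_of_one_le_left hB.le
        (one_le_sq_add_exp_two_mul x hz.le))
    rw [abs_of_pos hz] at hzB
    have hzB_nonneg : 0 ≤ z / B := by positivity
    rw [if_neg hz.not_ge, mul_zero, zero_div, add_zero]
    linarith

theorem stmt_14_general (κ : ℝ)
    (V : ℝ → ℝ → ℝ) (hV : V = fun x z => x ^ 2 + Real.log (1 + z ^ 2))
    (LV : ℝ → ℝ → ℝ)
    (hLV : ∀ x z, LV x z =
      κ / 2 * deriv (fun x' => deriv (fun x'' => V x'' z) x') x
      + (-(1/2) * x - 2 * x / (x ^ 2 + Real.exp (2 * z)))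
          * deriv (fun x' => V x' z) x
      + (-(1/2) + 2 / (x ^ 2 + Real.exp (2 * z)))
          * deriv (fun z' => V x z') z) :
    ∀ x z : ℝ, LV x z ≤ κ + 3 -
      (x ^ 2 + 4 * |z| * (if z ≤ 0 then (1:ℝ) else 0)
        / ((x ^ 2 + Real.exp (2 * z)) * (1 + z ^ 2))) := by
  intro x z
  subst hV
  have hVx : ∀ z, deriv (fun x => x ^ 2 + log (1 + z ^ 2)) = fun x => 2 * x := by
    intro z
    funext t
    simp
  have hVz : deriv (fun z => x ^ 2 + log (1 + z ^ 2)) z = 2 * z / (1 + z ^ 2) :=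
    ((hasDerivAt_log_one_add_sq z).const_add _).deriv
  have hVxx : deriv (fun x => 2 * x) x = 2 := by simp
  rw [hLV]
  simp only [hVx, hVz, hVxx]
  exact lyapunov_drift_le κ x z

/-- Lyapunov estimate: for `V(x,z) = x² + log(1+z²)` and the generator `L` of
the rescaled reverse SLE diffusion,
`LV(x,z) ≤ κ + 3 - (x² + 4|z| 𝟙(z≤0) / ((x²+e^{2z})(1+z²)))`. -/
theorem stmt_14 (κ : ℝ) (hκ : 0 < κ)
    (V : ℝ → ℝ → ℝ) (hV : V = fun x z => x ^ 2 + Real.log (1 + z ^ 2))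
    (LV : ℝ → ℝ → ℝ)
    (hLV : ∀ x z, LV x z =
      κ / 2 * deriv (fun x' => deriv (fun x'' => V x'' z) x') x
      + (-(1/2) * x - 2 * x / (x ^ 2 + Real.exp (2 * z)))
          * deriv (fun x' => V x' z) x
      + (-(1/2) + 2 / (x ^ 2 + Real.exp (2 * z)))
          * deriv (fun z' => V x z') z) :
    ∀ x z : ℝ, LV x z ≤ κ + 3 -
      (x ^ 2 + 4 * |z| * (if z ≤ 0 then (1:ℝ) else 0)
        / ((x ^ 2 + Real.exp (2 * z)) * (1 + z ^ 2))) :=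
  stmt_14_general κ V hV LV hLV
end

section
/- Let $\kappa > 0$ and let $\psi : \mathbb{R} \times (0,\infty) \to \mathbb{R}$ be twice continuously differentiable. Define $\varphi$ on $(0,\pi)\times(0,\infty)$ via the change of variables $x = \sqrt{u}\cot\alpha$, $y = \sqrt{u}$ by $\psi(x,y) = \frac{2y^2}{x^2+y^2}\varphi(\cot^{-1}(x/y), y^2)$. Then $\psi$ satisfies $\tfrac{\kappa}{2}\partial_{xx}\psi + \big(\tfrac{x}{2} + \tfrac{2x}{x^2+y^2}\big)\partial_x\psi + \big(\tfrac{y}{2} - \tfrac{2y}{x^2+y^2}\big)\partial_y\psi + \big(1 + \tfrac{4(y^2-x^2)}{(x^2+y^2)^2}\big)\psi = 0$ on $\mathbb{R}\times(0,\infty)$ if and only if $\varphi$ satisfies $\frac{\kappa}{2u}\sin^4\alpha\,\partial^2_{\alpha\alpha}\varphi + \frac{3\kappa-4}{u}\sin^3\alpha\cos\alpha\,\partial_\alpha\varphi + (u - 4\sin^2\alpha)\partial_u\varphi + \frac{\kappa-4}{u}(3\sin^2\alpha\cos^2\alpha - \sin^4\alpha)\varphi + \varphi = 0$ on $(0,\pi)\times(0,\infty)$.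 -/
set_option maxHeartbeats 1000000
open Real Set

private lemma slice_contDiff (ψ : ℝ → ℝ → ℝ)
    (hψC2 : ContDiffOn ℝ 2 (fun p : ℝ × ℝ => ψ p.1 p.2) (univ ×ˢ Ioi 0))
    {y : ℝ} (hy : 0 < y) : ContDiff ℝ 2 (fun x' => ψ x' y) := by
  have h : ContDiffOn ℝ 2 ((fun p : ℝ × ℝ => ψ p.1 p.2) ∘ (fun x' : ℝ => (x', y))) univ :=
    hψC2.comp (contDiff_id.prodMk contDiff_const).contDiffOn (fun x _ => ⟨mem_univ _, hy⟩)
  exact contDiffOn_univ.1 h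

private lemma deriv_hasDerivAt {f : ℝ → ℝ} (h : ContDiff ℝ 2 f) (x : ℝ) :
    HasDerivAt (deriv f) (deriv (deriv f) x) x := by
  have h2 : ContDiff ℝ ((1:ℕ) + 1) f := by exact_mod_cast h
  exact (((contDiff_succ_iff_deriv.1 h2).2.2).differentiable (by norm_num) x).hasDerivAt

private lemma key (κ : ℝ) (ψ φ : ℝ → ℝ → ℝ)
    (hψC2 : ContDiffOn ℝ 2 (fun p : ℝ × ℝ => ψ p.1 p.2) (univ ×ˢ Ioi 0))
    (hrel : ∀ α ∈ Ioo 0 π, ∀ u ∈ Ioi (0:ℝ),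
      ψ (Real.sqrt u * (cos α / sin α)) (Real.sqrt u) = 2 * sin α ^ 2 * φ α u)
    {α u : ℝ} (hα : α ∈ Ioo 0 π) (hu : u ∈ Ioi (0:ℝ)) :
    κ / (2 * u) * sin α ^ 4
            * deriv (fun α' => deriv (fun α'' => φ α'' u) α') α
        + (3 * κ - 4) / u * sin α ^ 3 * cos α * deriv (fun α' => φ α' u) α
        + (u - 4 * sin α ^ 2) * deriv (fun u' => φ α u') u
        + (κ - 4) / u * (3 * sin α ^ 2 * cos α ^ 2 - sin α ^ 4) * φ α u
        + φ α u
    = (1 / (2 * sin α ^ 2)) *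
      (κ / 2 * deriv (fun x' => deriv (fun x'' => ψ x'' (Real.sqrt u)) x')
          (Real.sqrt u * (cos α / sin α))
        + (Real.sqrt u * (cos α / sin α) / 2
            + 2 * (Real.sqrt u * (cos α / sin α))
              / ((Real.sqrt u * (cos α / sin α)) ^ 2 + Real.sqrt u ^ 2))
          * deriv (fun x' => ψ x' (Real.sqrt u)) (Real.sqrt u * (cos α / sin α))
        + (Real.sqrt u / 2
            - 2 * Real.sqrt u
              / ((Real.sqrt u * (cos α / sin α)) ^ 2 + Real.sqrt u ^ 2))
          * deriv (fun y' => ψ (Real.sqrt u * (cos α / sin α)) y') (Real.sqrt u)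
        + (1 + 4 * (Real.sqrt u ^ 2 - (Real.sqrt u * (cos α / sin α)) ^ 2)
              / ((Real.sqrt u * (cos α / sin α)) ^ 2 + Real.sqrt u ^ 2) ^ 2)
          * ψ (Real.sqrt u * (cos α / sin α)) (Real.sqrt u)) := by
  have hu0 : (0:ℝ) < u := hu
  have hr : (0:ℝ) < Real.sqrt u := Real.sqrt_pos.2 hu0
  have hrne : Real.sqrt u ≠ 0 := hr.ne'
  have hsin : ∀ a ∈ Ioo (0:ℝ) π, sin a ≠ 0 :=
    fun a ha => (Real.sin_pos_of_pos_of_lt_pi ha.1 ha.2).ne'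
  have hsα : sin α ≠ 0 := hsin α hα
  have hslice : ContDiff ℝ 2 (fun x' => ψ x' (Real.sqrt u)) := slice_contDiff ψ hψC2 hr
  have hPsiX : ∀ x : ℝ, HasDerivAt (fun x' => ψ x' (Real.sqrt u))
      (deriv (fun x' => ψ x' (Real.sqrt u)) x) x :=
    fun x => ((hslice.differentiable two_ne_zero) x).hasDerivAt
  have hPsiXX : ∀ x : ℝ, HasDerivAt (fun x' => deriv (fun x'' => ψ x'' (Real.sqrt u)) x')
      (deriv (fun x' => deriv (fun x'' => ψ x'' (Real.sqrt u)) x') x) x :=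
    fun x => deriv_hasDerivAt hslice x
  -- derivative of the inner change of variable
  have hXd : ∀ a ∈ Ioo (0:ℝ) π, HasDerivAt (fun a' => Real.sqrt u * (cos a' / sin a'))
      (-(Real.sqrt u / sin a ^ 2)) a := by
    intro a ha
    have h := ((Real.hasDerivAt_cos a).div (Real.hasDerivAt_sin a) (hsin a ha)).const_mul
      (Real.sqrt u)
    refine h.congr_deriv (Eq.symm ?_)
    have hp := sin_sq_add_cos_sq a
    field_simp [hsin a ha]
    linear_combination hp
  -- first α-derivative of φ
  have hD1 : ∀ a ∈ Ioo (0:ℝ) π, deriv (fun a' => φ a' u) a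
      = -(Real.sqrt u * deriv (fun x' => ψ x' (Real.sqrt u)) (Real.sqrt u * (cos a / sin a)))
          / (2 * sin a ^ 4)
        - cos a * ψ (Real.sqrt u * (cos a / sin a)) (Real.sqrt u) / sin a ^ 3 := by
    intro a ha
    have hsa := hsin a ha
    have heq : (fun a' => φ a' u) =ᶠ[nhds a]
        fun a' => ψ (Real.sqrt u * (cos a' / sin a')) (Real.sqrt u) / (2 * sin a' ^ 2) := by
      filter_upwards [isOpen_Ioo.mem_nhds ha] with b hb
      rw [hrel b hb u hu]
      field_simp [hsin b hb]
    rw [heq.deriv_eq]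
    have hcomp : HasDerivAt (fun a' => ψ (Real.sqrt u * (cos a' / sin a')) (Real.sqrt u))
        (deriv (fun x' => ψ x' (Real.sqrt u)) (Real.sqrt u * (cos a / sin a))
          * (-(Real.sqrt u / sin a ^ 2))) a :=
      (hPsiX _).comp a (hXd a ha)
    have hden : HasDerivAt (fun a' => 2 * sin a' ^ 2)
        (2 * ((2:ℕ) * sin a ^ 1 * cos a)) a :=
      ((Real.hasDerivAt_sin a).pow 2).const_mul 2
    have hne : 2 * sin a ^ 2 ≠ 0 := by positivity
    have hdiv := hcomp.div hden hne
    erw [hdiv.deriv]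
    field_simp
    ring
  -- second α-derivative of φ
  have hD2 : deriv (fun a => deriv (fun a' => φ a' u) a) α
      = Real.sqrt u ^ 2 * deriv (fun x' => deriv (fun x'' => ψ x'' (Real.sqrt u)) x')
            (Real.sqrt u * (cos α / sin α)) / (2 * sin α ^ 6)
        + 3 * Real.sqrt u * cos α
            * deriv (fun x' => ψ x' (Real.sqrt u)) (Real.sqrt u * (cos α / sin α)) / sin α ^ 5
        + (sin α ^ 2 + 3 * cos α ^ 2)
            * ψ (Real.sqrt u * (cos α / sin α)) (Real.sqrt u) / sin α ^ 4 := by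
    have heq2 : (fun a => deriv (fun a' => φ a' u) a) =ᶠ[nhds α]
        fun a => -(Real.sqrt u * deriv (fun x' => ψ x' (Real.sqrt u))
            (Real.sqrt u * (cos a / sin a))) / (2 * sin a ^ 4)
          - cos a * ψ (Real.sqrt u * (cos a / sin a)) (Real.sqrt u) / sin a ^ 3 := by
      filter_upwards [isOpen_Ioo.mem_nhds hα] with b hb using hD1 b hb
    rw [heq2.deriv_eq]
    have hXα := hXd α hα
    have hA : HasDerivAt
        (fun a => deriv (fun x' => ψ x' (Real.sqrt u)) (Real.sqrt u * (cos a / sin a)))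
        (deriv (fun x' => deriv (fun x'' => ψ x'' (Real.sqrt u)) x')
            (Real.sqrt u * (cos α / sin α)) * (-(Real.sqrt u / sin α ^ 2))) α :=
      (hPsiXX _).comp α hXα
    have hB : HasDerivAt
        (fun a => ψ (Real.sqrt u * (cos a / sin a)) (Real.sqrt u))
        (deriv (fun x' => ψ x' (Real.sqrt u)) (Real.sqrt u * (cos α / sin α))
          * (-(Real.sqrt u / sin α ^ 2))) α :=
      (hPsiX _).comp α hXα
    have hs4 : HasDerivAt (fun a => 2 * sin a ^ 4)
        (2 * ((4:ℕ) * sin α ^ 3 * cos α)) α :=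
      ((Real.hasDerivAt_sin α).pow 4).const_mul 2
    have hs3 : HasDerivAt (fun a => sin a ^ 3)
        ((3:ℕ) * sin α ^ 2 * cos α) α := (Real.hasDerivAt_sin α).pow 3
    have hne4 : 2 * sin α ^ 4 ≠ 0 := by positivity
    have hne3 : sin α ^ 3 ≠ 0 := pow_ne_zero _ hsα
    have hterm1 := ((hA.const_mul (Real.sqrt u)).neg).div hs4 hne4
    have hterm2 := ((Real.hasDerivAt_cos α).mul hB).div hs3 hne3
    have htot := hterm1.sub hterm2
    erw [htot.deriv]
    simp only [Pi.neg_apply, Pi.mul_apply]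
    field_simp
    ring
  -- u-derivative of φ
  have hdiffAt : DifferentiableAt ℝ (fun p : ℝ × ℝ => ψ p.1 p.2)
      (Real.sqrt u * (cos α / sin α), Real.sqrt u) :=
    (hψC2.differentiableOn two_ne_zero).differentiableAt
      ((isOpen_univ.prod isOpen_Ioi).mem_nhds ⟨mem_univ _, hr⟩)
  have hfd := hdiffAt.hasFDerivAt
  have hPxF : fderiv ℝ (fun p : ℝ × ℝ => ψ p.1 p.2)
      (Real.sqrt u * (cos α / sin α), Real.sqrt u) ((1:ℝ), (0:ℝ))
      = deriv (fun x' => ψ x' (Real.sqrt u)) (Real.sqrt u * (cos α / sin α)) := by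
    have h0 := hfd.comp_hasDerivAt (Real.sqrt u * (cos α / sin α))
      ((hasDerivAt_id (Real.sqrt u * (cos α / sin α))).prodMk
        (hasDerivAt_const (Real.sqrt u * (cos α / sin α)) (Real.sqrt u)))
    have h1 : HasDerivAt (fun x' => ψ x' (Real.sqrt u))
        (fderiv ℝ (fun p : ℝ × ℝ => ψ p.1 p.2)
          (Real.sqrt u * (cos α / sin α), Real.sqrt u) ((1:ℝ), (0:ℝ)))
        (Real.sqrt u * (cos α / sin α)) := h0
    exact h1.deriv.symm
  have hPyF : fderiv ℝ (fun p : ℝ × ℝ => ψ p.1 p.2)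
      (Real.sqrt u * (cos α / sin α), Real.sqrt u) ((0:ℝ), (1:ℝ))
      = deriv (fun y' => ψ (Real.sqrt u * (cos α / sin α)) y') (Real.sqrt u) := by
    have h0 := hfd.comp_hasDerivAt (Real.sqrt u)
      ((hasDerivAt_const (Real.sqrt u) (Real.sqrt u * (cos α / sin α))).prodMk
        (hasDerivAt_id (Real.sqrt u)))
    have h1 : HasDerivAt (fun y' => ψ (Real.sqrt u * (cos α / sin α)) y')
        (fderiv ℝ (fun p : ℝ × ℝ => ψ p.1 p.2)
          (Real.sqrt u * (cos α / sin α), Real.sqrt u) ((0:ℝ), (1:ℝ)))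
        (Real.sqrt u) := h0
    exact h1.deriv.symm
  have hDu : deriv (fun u' => φ α u') u
      = cos α * deriv (fun x' => ψ x' (Real.sqrt u)) (Real.sqrt u * (cos α / sin α))
          / (4 * Real.sqrt u * sin α ^ 3)
        + deriv (fun y' => ψ (Real.sqrt u * (cos α / sin α)) y') (Real.sqrt u)
          / (4 * Real.sqrt u * sin α ^ 2) := by
    have heq3 : (fun u' => φ α u') =ᶠ[nhds u]
        fun u' => ψ (Real.sqrt u' * (cos α / sin α)) (Real.sqrt u') / (2 * sin α ^ 2) := by
      filter_upwards [isOpen_Ioi.mem_nhds hu0] with v hv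
      rw [hrel α hα v hv]
      field_simp [hsα]
    rw [heq3.deriv_eq]
    have hsq := Real.hasDerivAt_sqrt (ne_of_gt hu0)
    have hcurve : HasDerivAt (fun u' => (Real.sqrt u' * (cos α / sin α), Real.sqrt u'))
        ((1 / (2 * Real.sqrt u) * (cos α / sin α), 1 / (2 * Real.sqrt u))) u :=
      (hsq.mul_const _).prodMk hsq
    have hcomp : HasDerivAt (fun u' => ψ (Real.sqrt u' * (cos α / sin α)) (Real.sqrt u'))
        (fderiv ℝ (fun p : ℝ × ℝ => ψ p.1 p.2)
          (Real.sqrt u * (cos α / sin α), Real.sqrt u)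
          ((1 / (2 * Real.sqrt u) * (cos α / sin α), 1 / (2 * Real.sqrt u)))) u := by
      have h0 := hfd.comp_hasDerivAt u hcurve
      exact h0
    have hdiv := hcomp.div_const (2 * sin α ^ 2)
    rw [hdiv.deriv]
    have hvec : ((1 / (2 * Real.sqrt u) * (cos α / sin α), 1 / (2 * Real.sqrt u)) : ℝ × ℝ)
        = (1 / (2 * Real.sqrt u) * (cos α / sin α)) • ((1:ℝ), (0:ℝ))
          + (1 / (2 * Real.sqrt u)) • ((0:ℝ), (1:ℝ)) := by
      simp [Prod.ext_iff]
    rw [hvec, map_add, map_smul, map_smul, smul_eq_mul, smul_eq_mul, hPxF, hPyF]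
    field_simp
    ring
  -- value of φ
  have hφval : φ α u = ψ (Real.sqrt u * (cos α / sin α)) (Real.sqrt u) / (2 * sin α ^ 2) := by
    rw [hrel α hα u hu]
    field_simp [hsα]
  -- assemble
  rw [hD2, hD1 α hα, hDu, hφval]
  have hxy : (Real.sqrt u * (cos α / sin α)) ^ 2 + Real.sqrt u ^ 2 = u / sin α ^ 2 := by
    have h1 : Real.sqrt u ^ 2 = u := Real.sq_sqrt hu0.le
    field_simp [hsα]
    linear_combination u * sin_sq_add_cos_sq α + (Real.cos α ^ 2 + Real.sin α ^ 2) * h1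
  rw [hxy]
  have h1 : Real.sqrt u ^ 2 = u := Real.sq_sqrt hu0.le
  set r := Real.sqrt u with hrdef
  rw [← h1]
  field_simp
  ring

/-- Change of variables `(x, y) ↦ (α, u) = (cot⁻¹(x/y), y²)` for the
Fokker–Planck–Kolmogorov equation of the SLE tip density. Since
`x = √u cot α`, `y = √u` and the Jacobian factor is `2y²/(x²+y²) = 2 sin²α`,
the relation between `ψ` and `φ` reads
`ψ(√u cot α, √u) = 2 sin²α · φ(α, u)`. -/
theorem stmt_16 (κ : ℝ) (hκ : 0 < κ)
    (ψ : ℝ → ℝ → ℝ) (φ : ℝ → ℝ → ℝ)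
    (hψC2 : ContDiffOn ℝ 2 (fun p : ℝ × ℝ => ψ p.1 p.2) (univ ×ˢ Ioi 0))
    (hφC2 : ContDiffOn ℝ 2 (fun p : ℝ × ℝ => φ p.1 p.2) (Ioo 0 π ×ˢ Ioi 0))
    (hrel : ∀ α ∈ Ioo 0 π, ∀ u ∈ Ioi (0:ℝ),
      ψ (Real.sqrt u * (cos α / sin α)) (Real.sqrt u) = 2 * sin α ^ 2 * φ α u) :
    (∀ x : ℝ, ∀ y ∈ Ioi (0:ℝ),
        κ / 2 * deriv (fun x' => deriv (fun x'' => ψ x'' y) x') x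
        + (x / 2 + 2 * x / (x ^ 2 + y ^ 2)) * deriv (fun x' => ψ x' y) x
        + (y / 2 - 2 * y / (x ^ 2 + y ^ 2)) * deriv (fun y' => ψ x y') y
        + (1 + 4 * (y ^ 2 - x ^ 2) / (x ^ 2 + y ^ 2) ^ 2) * ψ x y = 0)
    ↔
    (∀ α ∈ Ioo 0 π, ∀ u ∈ Ioi (0:ℝ),
        κ / (2 * u) * sin α ^ 4
            * deriv (fun α' => deriv (fun α'' => φ α'' u) α') α
        + (3 * κ - 4) / u * sin α ^ 3 * cos α * deriv (fun α' => φ α' u) α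
        + (u - 4 * sin α ^ 2) * deriv (fun u' => φ α u') u
        + (κ - 4) / u * (3 * sin α ^ 2 * cos α ^ 2 - sin α ^ 4) * φ α u
        + φ α u = 0) := by
  constructor
  · intro hyp α hα u hu
    have hr : (0:ℝ) < Real.sqrt u := Real.sqrt_pos.2 hu
    rw [key κ ψ φ hψC2 hrel hα hu,
      hyp (Real.sqrt u * (cos α / sin α)) (Real.sqrt u) hr, mul_zero]
  · intro hyp x y hy
    have hy0 : (0:ℝ) < y := hy
    set θ := Real.arctan (x / y) with hθ
    have hα : π / 2 - θ ∈ Ioo (0:ℝ) π := by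
      constructor
      · have := Real.arctan_lt_pi_div_two (x / y); linarith
      · have := Real.neg_pi_div_two_lt_arctan (x / y)
        have hπ := Real.pi_pos; linarith
    have hu : y ^ 2 ∈ Ioi (0:ℝ) := mem_Ioi.mpr (by positivity)
    have hsy : Real.sqrt (y ^ 2) = y := Real.sqrt_sq hy0.le
    have hX : Real.sqrt (y ^ 2) * (cos (π / 2 - θ) / sin (π / 2 - θ)) = x := by
      rw [hsy, Real.cos_pi_div_two_sub, Real.sin_pi_div_two_sub, ← Real.tan_eq_sin_div_cos,
        hθ, Real.tan_arctan]
      field_simp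
    have hk := key κ ψ φ hψC2 hrel hα hu
    rw [hX, hsy] at hk
    rw [hyp (π / 2 - θ) hα (y ^ 2) hu] at hk
    have hs : sin (π / 2 - θ) ≠ 0 :=
      (Real.sin_pos_of_pos_of_lt_pi hα.1 hα.2).ne'
    have hfac : (1 / (2 * sin (π / 2 - θ) ^ 2) : ℝ) ≠ 0 :=
      one_div_ne_zero (mul_ne_zero two_ne_zero (pow_ne_zero _ hs))
    exact (mul_eq_zero.mp hk.symm).resolve_left hfac
end
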